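/- Suppose (X,𝒜,μ) is a Peano-Jordan complete bounded charge space with null sets 𝒩, and 𝒜′ is a sub-field of 𝒜 such that \overline{α(𝒜′ ∪ 𝒩)} = α(\overline{𝒜′} ∪ 𝒩). Then for every f ∈ L0(X, α(𝒜′ ∪ 𝒩), μ) there exists h ∈ L0(X, 𝒜′, μ) such that f = h almost everywhere (with respect to α(𝒜′ ∪ 𝒩)). Moreover, if f ∈ L_p(X, α(𝒜′ ∪ 𝒩), μ) for some p ∈ [1,∞), then h ∈ L_p(X, 𝒜′, μ). -/

import Mathlib

open Filter Set Topology

section ChargeDefs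

variable {X : Type*}

/-- A field of sets on `X`: contains `∅`, closed under complements and finite unions. -/
structure IsSetField (𝒜 : Set (Set X)) : Prop where
  empty_mem : (∅ : Set X) ∈ 𝒜
  compl_mem : ∀ A ∈ 𝒜, Aᶜ ∈ 𝒜
  union_mem : ∀ A ∈ 𝒜, ∀ B ∈ 𝒜, A ∪ B ∈ 𝒜

/-- A (bounded, non-negative) charge space: a field of sets together with a finitely
additive non-negative real-valued set function vanishing on `∅`.  (The function `μ` is
given on all of `𝒫(X)`; only its values on `𝒜` are constrained or used.) -/
structure IsCharge (𝒜 : Set (Set X)) (μ : Set X → ℝ) : Prop where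
  isSetField : IsSetField 𝒜
  empty : μ ∅ = 0
  nonneg : ∀ A ∈ 𝒜, 0 ≤ μ A
  additive : ∀ A ∈ 𝒜, ∀ B ∈ 𝒜, Disjoint A B → μ (A ∪ B) = μ A + μ B

/-- The outer charge `μ*(A) = inf {μ B : B ∈ 𝒜, A ⊆ B}`. -/
noncomputable def outerCharge (𝒜 : Set (Set X)) (μ : Set X → ℝ) (A : Set X) : ℝ :=
  sInf (μ '' {B | B ∈ 𝒜 ∧ A ⊆ B})

/-- A null function: `μ*({x : |h x| > ε}) = 0` for every `ε > 0`. -/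
def IsNullFn (𝒜 : Set (Set X)) (μ : Set X → ℝ) (h : X → ℝ) : Prop :=
  ∀ ε > (0 : ℝ), outerCharge 𝒜 μ {x | ε < |h x|} = 0

/-- `f = g` almost everywhere: `f - g` is a null function. -/
def EqAE (𝒜 : Set (Set X)) (μ : Set X → ℝ) (f g : X → ℝ) : Prop :=
  IsNullFn 𝒜 μ (fun x => f x - g x)

/-- `f ≤ g` almost everywhere: `f ≤ g + h` for some null function `h`. -/
def LeAE (𝒜 : Set (Set X)) (μ : Set X → ℝ) (f g : X → ℝ) : Prop :=
  ∃ h : X → ℝ, IsNullFn 𝒜 μ h ∧ ∀ x, f x ≤ g x + h x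

/-- Hazy convergence of a sequence of functions. -/
def HazyConv (𝒜 : Set (Set X)) (μ : Set X → ℝ) (fn : ℕ → X → ℝ) (f : X → ℝ) : Prop :=
  ∀ ε > (0 : ℝ), Tendsto (fun n => outerCharge 𝒜 μ {x | ε < |fn n x - f x|}) atTop (𝓝 0)

/-- A simple function w.r.t. the field `𝒜`: `Σ c_k 1_{A_k}` for a finite partition
`{A_k} ⊆ 𝒜` of `X`. -/
def IsSimpleFn (𝒜 : Set (Set X)) (f : X → ℝ) : Prop :=
  ∃ (n : ℕ) (c : Fin n → ℝ) (A : Fin n → Set X),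
    (∀ k, A k ∈ 𝒜) ∧ (Pairwise fun i j => Disjoint (A i) (A j)) ∧
    (⋃ k, A k) = Set.univ ∧ ∀ x, f x = ∑ k, (A k).indicator (fun _ => c k) x

/-- `T₁`-measurability: `f` is the hazy limit of a sequence of simple functions.
`MemL0 𝒜 μ f` says `f ∈ L₀(X,𝒜,μ)`. -/
def MemL0 (𝒜 : Set (Set X)) (μ : Set X → ℝ) (f : X → ℝ) : Prop :=
  ∃ fn : ℕ → X → ℝ, (∀ n, IsSimpleFn 𝒜 (fn n)) ∧ HazyConv 𝒜 μ fn f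

/-- Integral of a simple function: `Σ_y y·μ(f⁻¹{y})` (a finite sum for simple `f`;
for a simple function `Σ c_k 1_{A_k}` over a partition this equals `Σ c_k μ(A_k)`). -/
noncomputable def sIntegral (μ : Set X → ℝ) (f : X → ℝ) : ℝ :=
  ∑ᶠ y, y * μ (f ⁻¹' {y})

/-- A determining sequence for `f`: simple functions converging hazily to `f` with
`∫ |f_n - f_m| dμ → 0` as `m, n → ∞`. -/
def IsDetermining (𝒜 : Set (Set X)) (μ : Set X → ℝ) (fn : ℕ → X → ℝ) (f : X → ℝ) : Prop :=
  (∀ n, IsSimpleFn 𝒜 (fn n)) ∧ HazyConv 𝒜 μ fn f ∧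
    Tendsto (fun mn : ℕ × ℕ => sIntegral μ (fun x => |fn mn.1 x - fn mn.2 x|)) atTop (𝓝 0)

/-- Integrability w.r.t. a charge: existence of a determining sequence.
`MemL1 𝒜 μ f` says `f ∈ L₁(X,𝒜,μ)`. -/
def MemL1 (𝒜 : Set (Set X)) (μ : Set X → ℝ) (f : X → ℝ) : Prop :=
  ∃ fn : ℕ → X → ℝ, IsDetermining 𝒜 μ fn f

-- The integral `∫ f dμ` of an integrable function: the limit of the integrals of
-- any determining sequence (this limit is independent of the choice).
open Classical in
noncomputable def chargeIntegral (𝒜 : Set (Set X)) (μ : Set X → ℝ) (f : X → ℝ) : ℝ :=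
  if h : ∃ fn : ℕ → X → ℝ, IsDetermining 𝒜 μ fn f then
    limUnder atTop (fun n => sIntegral μ (h.choose n))
  else 0

/-- Smoothness: for every `ε > 0` there is `k > 0` with `μ*({x : |f x| > k}) < ε`. -/
def SmoothFn (𝒜 : Set (Set X)) (μ : Set X → ℝ) (f : X → ℝ) : Prop :=
  ∀ ε > (0 : ℝ), ∃ k > (0 : ℝ), outerCharge 𝒜 μ {x | k < |f x|} < ε

/-- The field of the Peano-Jordan completion of `(X,𝒜,μ)`. -/
def pjField (𝒜 : Set (Set X)) (μ : Set X → ℝ) : Set (Set X) :=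
  {A | ∀ ε > (0 : ℝ), ∃ B ∈ 𝒜, ∃ C ∈ 𝒜, B ⊆ A ∧ A ⊆ C ∧ μ (C \ B) < ε}

/-- The charge of the Peano-Jordan completion: `μ̄(A) = sup {μ B : B ∈ 𝒜, B ⊆ A}`. -/
noncomputable def pjCharge (𝒜 : Set (Set X)) (μ : Set X → ℝ) (A : Set X) : ℝ :=
  sSup (μ '' {B | B ∈ 𝒜 ∧ B ⊆ A})

/-- The pseudometric `d` on `L₀`. -/
noncomputable def hazyDist (𝒜 : Set (Set X)) (μ : Set X → ℝ) (f g : X → ℝ) : ℝ :=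
  sInf {ε : ℝ | 0 < ε ∧ outerCharge 𝒜 μ {x | ε < |f x - g x|} < ε}

/-- `f ∈ L_p(X,𝒜,μ)` for `p ∈ [1,∞)`: `f` is `T₁`-measurable and `|f|^p` integrable. -/
def MemLpC (𝒜 : Set (Set X)) (μ : Set X → ℝ) (p : ℝ) (f : X → ℝ) : Prop :=
  MemL0 𝒜 μ f ∧ MemL1 𝒜 μ (fun x => |f x| ^ p)

/-- `f ∈ L_p` for `p ∈ {0} ∪ [1,∞)`. -/
def MemLp' (𝒜 : Set (Set X)) (μ : Set X → ℝ) (p : ℝ) (f : X → ℝ) : Prop :=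
  if p = 0 then MemL0 𝒜 μ f else MemLpC 𝒜 μ p f

/-- The distance on `L_p`: the pseudometric `d` for `p = 0`, and
`‖f - g‖_p = (∫ |f-g|^p dμ)^(1/p)` for `p ≥ 1`. -/
noncomputable def LpDist (𝒜 : Set (Set X)) (μ : Set X → ℝ) (p : ℝ) (f g : X → ℝ) : ℝ :=
  if p = 0 then hazyDist 𝒜 μ f g
  else (chargeIntegral 𝒜 μ fun x => |f x - g x| ^ p) ^ (1 / p)

/-- The collection of null sets of a charge space. -/
def nullSets (𝒜 : Set (Set X)) (μ : Set X → ℝ) : Set (Set X) :=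
  {A | outerCharge 𝒜 μ A = 0}

/-- The smallest field of sets on `X` containing a given collection `𝒞`. -/
def genSetField (𝒞 : Set (Set X)) : Set (Set X) :=
  ⋂₀ {𝒟 | IsSetField 𝒟 ∧ 𝒞 ⊆ 𝒟}

end ChargeDefs

section Aux

open Filter Set Topology

variable {X : Type*} {𝒜 ℬ : Set (Set X)} {μ : Set X → ℝ} {A B : Set X}

theorem IsSetField.univ_mem (h : IsSetField 𝒜) : (univ : Set X) ∈ 𝒜 := by
  simpa using h.compl_mem ∅ h.empty_mem

theorem IsSetField.inter_mem (h : IsSetField 𝒜) (hA : A ∈ 𝒜) (hB : B ∈ 𝒜) : A ∩ B ∈ 𝒜 := by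
  have := h.compl_mem _ (h.union_mem _ (h.compl_mem A hA) _ (h.compl_mem B hB))
  simpa [Set.compl_union] using this

theorem IsSetField.diff_mem (h : IsSetField 𝒜) (hA : A ∈ 𝒜) (hB : B ∈ 𝒜) : A \ B ∈ 𝒜 := by
  rw [Set.diff_eq]; exact h.inter_mem hA (h.compl_mem B hB)

theorem IsSetField.biUnion_mem (h : IsSetField 𝒜) {ι : Type*} (t : Finset ι) (A : ι → Set X)
    (hA : ∀ i ∈ t, A i ∈ 𝒜) : (⋃ i ∈ t, A i) ∈ 𝒜 := by
  classical
  induction t using Finset.induction_on with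
  | empty => simpa using h.empty_mem
  | insert a s hnot ih =>
    rw [Finset.set_biUnion_insert]
    exact h.union_mem _ (hA a (Finset.mem_insert_self a s)) _
      (ih fun i hi => hA i (Finset.mem_insert_of_mem hi))

theorem IsSetField.biInter_mem (h : IsSetField 𝒜) {ι : Type*} (t : Finset ι) (A : ι → Set X)
    (hA : ∀ i ∈ t, A i ∈ 𝒜) : (⋂ i ∈ t, A i) ∈ 𝒜 := by
  have : (⋂ i ∈ t, A i) = (⋃ i ∈ t, (A i)ᶜ)ᶜ := by
    simp [Set.compl_iUnion]
  rw [this]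
  exact h.compl_mem _ (h.biUnion_mem t _ fun i hi => h.compl_mem _ (hA i hi))

/-! ### charge lemmas -/

theorem IsCharge.mono (hμ : IsCharge 𝒜 μ) (hA : A ∈ 𝒜) (hB : B ∈ 𝒜) (hAB : A ⊆ B) :
    μ A ≤ μ B := by
  have hd : B = A ∪ (B \ A) := (Set.union_diff_cancel hAB).symm
  have := hμ.additive A hA (B \ A) (hμ.isSetField.diff_mem hB hA) disjoint_sdiff_self_right
  rw [← hd] at this
  have h0 := hμ.nonneg (B \ A) (hμ.isSetField.diff_mem hB hA)
  linarith

theorem IsCharge.diff_eq (hμ : IsCharge 𝒜 μ) (hA : A ∈ 𝒜) (hB : B ∈ 𝒜) (hAB : A ⊆ B) :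
    μ (B \ A) = μ B - μ A := by
  have hd : B = A ∪ (B \ A) := (Set.union_diff_cancel hAB).symm
  have := hμ.additive A hA (B \ A) (hμ.isSetField.diff_mem hB hA) disjoint_sdiff_self_right
  rw [← hd] at this; linarith

theorem IsCharge.subadd (hμ : IsCharge 𝒜 μ) (hA : A ∈ 𝒜) (hB : B ∈ 𝒜) :
    μ (A ∪ B) ≤ μ A + μ B := by
  have h1 : A ∪ B = A ∪ (B \ A) := by rw [Set.union_diff_self]
  have := hμ.additive A hA (B \ A) (hμ.isSetField.diff_mem hB hA) disjoint_sdiff_self_right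
  rw [← h1] at this
  have h2 : μ (B \ A) ≤ μ B := hμ.mono (hμ.isSetField.diff_mem hB hA) hB diff_subset
  linarith

/-! ### outer charge lemmas; `ℬ` is a subfield of `𝒜` -/

theorem oc_nonneg (hμ : IsCharge 𝒜 μ) (hℬ : ℬ ⊆ 𝒜) (A : Set X) :
    0 ≤ outerCharge ℬ μ A := by
  apply Real.sInf_nonneg
  rintro x ⟨B, ⟨hB, -⟩, rfl⟩
  exact hμ.nonneg B (hℬ hB)

theorem oc_bddBelow (hμ : IsCharge 𝒜 μ) (hℬ : ℬ ⊆ 𝒜) (A : Set X) :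
    BddBelow (μ '' {B | B ∈ ℬ ∧ A ⊆ B}) := by
  refine ⟨0, ?_⟩
  rintro x ⟨B, ⟨hB, -⟩, rfl⟩
  exact hμ.nonneg B (hℬ hB)

theorem oc_le_of_cover (hμ : IsCharge 𝒜 μ) (hℬ : ℬ ⊆ 𝒜) (hB : B ∈ ℬ) (hAB : A ⊆ B) :
    outerCharge ℬ μ A ≤ μ B :=
  csInf_le (oc_bddBelow hμ hℬ A) ⟨B, ⟨hB, hAB⟩, rfl⟩

theorem oc_exists_cover (hμ : IsCharge 𝒜 μ) (hℬf : IsSetField ℬ) {r : ℝ}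
    (h : outerCharge ℬ μ A < r) : ∃ B ∈ ℬ, A ⊆ B ∧ μ B < r := by
  have hne : (μ '' {B | B ∈ ℬ ∧ A ⊆ B}).Nonempty :=
    ⟨μ univ, ⟨univ, ⟨hℬf.univ_mem, subset_univ A⟩, rfl⟩⟩
  obtain ⟨x, ⟨B, ⟨hB, hAB⟩, rfl⟩, hx⟩ := exists_lt_of_csInf_lt hne h
  exact ⟨B, hB, hAB, hx⟩

theorem oc_cover_nonempty (hℬf : IsSetField ℬ) (A : Set X) :
    (μ '' {B | B ∈ ℬ ∧ A ⊆ B}).Nonempty :=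
  ⟨μ univ, ⟨univ, ⟨hℬf.univ_mem, subset_univ A⟩, rfl⟩⟩

theorem oc_ge (hμ : IsCharge 𝒜 μ) (hℬ : ℬ ⊆ 𝒜) (hℬf : IsSetField ℬ) {r : ℝ}
    (h : ∀ B ∈ ℬ, A ⊆ B → r ≤ μ B) : r ≤ outerCharge ℬ μ A := by
  apply le_csInf (oc_cover_nonempty hℬf A)
  rintro x ⟨B, ⟨hB, hAB⟩, rfl⟩
  exact h B hB hAB

theorem oc_mono (hμ : IsCharge 𝒜 μ) (hℬ : ℬ ⊆ 𝒜) (hℬf : IsSetField ℬ) (hAB : A ⊆ B) :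
    outerCharge ℬ μ A ≤ outerCharge ℬ μ B := by
  apply le_csInf (oc_cover_nonempty hℬf B)
  rintro x ⟨C, ⟨hC, hBC⟩, rfl⟩
  exact oc_le_of_cover hμ hℬ hC (hAB.trans hBC)

theorem oc_anti_field {ℬ' : Set (Set X)} (hμ : IsCharge 𝒜 μ) (hℬ : ℬ ⊆ 𝒜) (h12 : ℬ' ⊆ ℬ)
    (hℬ'f : IsSetField ℬ') (A : Set X) : outerCharge ℬ μ A ≤ outerCharge ℬ' μ A := by
  refine csInf_le_csInf (oc_bddBelow hμ hℬ A) (oc_cover_nonempty hℬ'f A) ?_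
  rintro x ⟨B, ⟨hB, hAB⟩, rfl⟩
  exact ⟨B, ⟨h12 hB, hAB⟩, rfl⟩

theorem oc_eq_self (hμ : IsCharge 𝒜 μ) (hℬ : ℬ ⊆ 𝒜) (hℬf : IsSetField ℬ) (hA : A ∈ ℬ) :
    outerCharge ℬ μ A = μ A := by
  refine le_antisymm (oc_le_of_cover hμ hℬ hA Subset.rfl) ?_
  exact oc_ge hμ hℬ hℬf fun B hB hAB => hμ.mono (hℬ hA) (hℬ hB) hAB

theorem oc_subadd (hμ : IsCharge 𝒜 μ) (hℬ : ℬ ⊆ 𝒜) (hℬf : IsSetField ℬ) (A B : Set X) :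
    outerCharge ℬ μ (A ∪ B) ≤ outerCharge ℬ μ A + outerCharge ℬ μ B := by
  by_contra hlt
  push_neg at hlt
  obtain ⟨ε, hε, hεlt⟩ : ∃ ε > 0, outerCharge ℬ μ A + outerCharge ℬ μ B + ε < outerCharge ℬ μ (A ∪ B) := by
    refine ⟨(outerCharge ℬ μ (A ∪ B) - outerCharge ℬ μ A - outerCharge ℬ μ B)/2, by linarith, by linarith⟩
  obtain ⟨CA, hCA, hACA, hμCA⟩ := oc_exists_cover hμ hℬf (show outerCharge ℬ μ A < outerCharge ℬ μ A + ε/2 by linarith)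
  obtain ⟨CB, hCB, hBCB, hμCB⟩ := oc_exists_cover hμ hℬf (show outerCharge ℬ μ B < outerCharge ℬ μ B + ε/2 by linarith)
  have hcover : outerCharge ℬ μ (A ∪ B) ≤ μ (CA ∪ CB) :=
    oc_le_of_cover hμ hℬ (hℬf.union_mem _ hCA _ hCB) (union_subset_union hACA hBCB)
  have := hμ.subadd (hℬ hCA) (hℬ hCB)
  linarith

end Aux
section Aux2

open Filter Set Topology

variable {X : Type*} {𝒜 ℬ : Set (Set X)} {μ : Set X → ℝ} {A B : Set X}

theorem genSetField_isSetField (𝒞 : Set (Set X)) : IsSetField (genSetField 𝒞) := by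
  constructor
  · exact fun 𝒟 h𝒟 => h𝒟.1.empty_mem
  · intro A hA 𝒟 h𝒟
    exact h𝒟.1.compl_mem A (hA 𝒟 h𝒟)
  · intro A hA B hB 𝒟 h𝒟
    exact h𝒟.1.union_mem A (hA 𝒟 h𝒟) B (hB 𝒟 h𝒟)

theorem subset_genSetField (𝒞 : Set (Set X)) : 𝒞 ⊆ genSetField 𝒞 :=
  fun A hA 𝒟 h𝒟 => h𝒟.2 hA

theorem genSetField_le {𝒞 𝒟 : Set (Set X)} (h𝒟 : IsSetField 𝒟) (h : 𝒞 ⊆ 𝒟) :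
    genSetField 𝒞 ⊆ 𝒟 := fun A hA => hA 𝒟 ⟨h𝒟, h⟩

theorem oc_empty (hμ : IsCharge 𝒜 μ) (hℬ : ℬ ⊆ 𝒜) (hℬf : IsSetField ℬ) :
    outerCharge ℬ μ (∅ : Set X) = 0 := by
  refine le_antisymm ?_ (oc_nonneg hμ hℬ _)
  have := oc_le_of_cover hμ hℬ hℬf.empty_mem (Subset.rfl : (∅ : Set X) ⊆ ∅)
  rwa [hμ.empty] at this

theorem oc_null_of_subset (hμ : IsCharge 𝒜 μ) (hℬ : ℬ ⊆ 𝒜) (hℬf : IsSetField ℬ)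
    (hAB : A ⊆ B) (hB : outerCharge ℬ μ B = 0) : outerCharge ℬ μ A = 0 :=
  le_antisymm (hB ▸ oc_mono hμ hℬ hℬf hAB) (oc_nonneg hμ hℬ A)

theorem oc_null_union (hμ : IsCharge 𝒜 μ) (hℬ : ℬ ⊆ 𝒜) (hℬf : IsSetField ℬ)
    (hA : outerCharge ℬ μ A = 0) (hB : outerCharge ℬ μ B = 0) :
    outerCharge ℬ μ (A ∪ B) = 0 := by
  refine le_antisymm ?_ (oc_nonneg hμ hℬ _)
  have := oc_subadd hμ hℬ hℬf A B
  rw [hA, hB] at this; linarith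

/-! ### null sets -/

theorem nullSets_subset (hμ : IsCharge 𝒜 μ) (hpj : pjField 𝒜 μ = 𝒜) :
    nullSets 𝒜 μ ⊆ 𝒜 := by
  intro A hA
  rw [← hpj]
  intro ε hε
  obtain ⟨C, hC, hAC, hμC⟩ := oc_exists_cover hμ hμ.isSetField (show outerCharge 𝒜 μ A < ε by
    rw [hA]; exact hε)
  exact ⟨∅, hμ.isSetField.empty_mem, C, hC, empty_subset A, hAC, by rwa [Set.diff_empty]⟩

theorem mu_eq_oc (hμ : IsCharge 𝒜 μ) (hA : A ∈ 𝒜) : μ A = outerCharge 𝒜 μ A :=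
  (oc_eq_self hμ Subset.rfl hμ.isSetField hA).symm

theorem mu_null (hμ : IsCharge 𝒜 μ) (hpj : pjField 𝒜 μ = 𝒜) (hA : A ∈ nullSets 𝒜 μ) :
    μ A = 0 := by
  rw [mu_eq_oc hμ (nullSets_subset hμ hpj hA)]; exact hA

theorem mu_null_subset (hμ : IsCharge 𝒜 μ) (hA : A ∈ 𝒜) {N : Set X}
    (hAN : A ⊆ N) (hN : outerCharge 𝒜 μ N = 0) : μ A = 0 := by
  rw [mu_eq_oc hμ hA]
  exact oc_null_of_subset hμ Subset.rfl hμ.isSetField hAN hN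

/-! ### the `𝒟`-lemma: sets in `α(ℰ ∪ 𝒩)` are null-symmetric-difference from sets of `ℰ` -/

theorem genSetField_null_approx {ℰ : Set (Set X)} (hμ : IsCharge 𝒜 μ)
    (hℰ : IsSetField ℰ) :
    genSetField (ℰ ∪ nullSets 𝒜 μ) ⊆
      {A | ∃ T ∈ ℰ, outerCharge 𝒜 μ ((A \ T) ∪ (T \ A)) = 0} := by
  have hAf := hμ.isSetField
  apply genSetField_le
  · constructor
    · exact ⟨∅, hℰ.empty_mem, by simpa using oc_empty hμ Subset.rfl hAf⟩
    · rintro A ⟨T, hT, hnull⟩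
      refine ⟨Tᶜ, hℰ.compl_mem T hT, ?_⟩
      have : (Aᶜ \ Tᶜ) ∪ (Tᶜ \ Aᶜ) = (A \ T) ∪ (T \ A) := by
        ext x; simp [Set.mem_diff]; tauto
      rw [this]; exact hnull
    · rintro A ⟨T, hT, hnullA⟩ B ⟨U, hU, hnullB⟩
      refine ⟨T ∪ U, hℰ.union_mem T hT U hU, ?_⟩
      have hsub : ((A ∪ B) \ (T ∪ U)) ∪ ((T ∪ U) \ (A ∪ B)) ⊆
          ((A \ T) ∪ (T \ A)) ∪ ((B \ U) ∪ (U \ B)) := by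
        intro x hx
        simp only [Set.mem_union, Set.mem_diff] at hx ⊢
        tauto
      refine oc_null_of_subset hμ Subset.rfl hAf hsub ?_
      exact oc_null_union hμ Subset.rfl hAf hnullA hnullB
  · rintro A (hA | hA)
    · exact ⟨A, hA, by simpa using oc_empty hμ Subset.rfl hAf⟩
    · refine ⟨∅, hℰ.empty_mem, ?_⟩
      have : (A \ ∅) ∪ ((∅ : Set X) \ A) = A := by simp
      rw [this]; exact hA

/-! ### Peano-Jordan completion of a subfield -/

theorem pjField_isSetField {𝒜' : Set (Set X)} (hμ : IsCharge 𝒜 μ) (hsub : 𝒜' ⊆ 𝒜)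
    (h𝒜' : IsSetField 𝒜') : IsSetField (pjField 𝒜' μ) := by
  constructor
  · intro ε hε
    refine ⟨∅, h𝒜'.empty_mem, ∅, h𝒜'.empty_mem, Subset.rfl, Subset.rfl, ?_⟩
    simpa [hμ.empty] using hε
  · intro A hA ε hε
    obtain ⟨B, hB, C, hC, hBA, hAC, hμCB⟩ := hA ε hε
    refine ⟨Cᶜ, h𝒜'.compl_mem C hC, Bᶜ, h𝒜'.compl_mem B hB,
      compl_subset_compl.2 hAC, compl_subset_compl.2 hBA, ?_⟩
    have he : Bᶜ \ Cᶜ = C \ B := by ext x; simp [Set.mem_diff]; tauto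
    rwa [he]
  · intro A hA B hB ε hε
    obtain ⟨BA, hBA, CA, hCA, h1, h2, h3⟩ := hA (ε/2) (by linarith)
    obtain ⟨BB, hBB, CB, hCB, h4, h5, h6⟩ := hB (ε/2) (by linarith)
    refine ⟨BA ∪ BB, h𝒜'.union_mem _ hBA _ hBB, CA ∪ CB, h𝒜'.union_mem _ hCA _ hCB,
      union_subset_union h1 h4, union_subset_union h2 h5, ?_⟩
    have hsubd : (CA ∪ CB) \ (BA ∪ BB) ⊆ (CA \ BA) ∪ (CB \ BB) := by
      intro x hx; simp only [mem_union, mem_diff] at hx ⊢; tauto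
    have hm : μ ((CA ∪ CB) \ (BA ∪ BB)) ≤ μ ((CA \ BA) ∪ (CB \ BB)) :=
      hμ.mono (hμ.isSetField.diff_mem (hμ.isSetField.union_mem _ (hsub hCA) _ (hsub hCB))
          (hμ.isSetField.union_mem _ (hsub hBA) _ (hsub hBB)))
        (hμ.isSetField.union_mem _ (hμ.isSetField.diff_mem (hsub hCA) (hsub hBA)) _
          (hμ.isSetField.diff_mem (hsub hCB) (hsub hBB))) hsubd
    have hs := hμ.subadd (hμ.isSetField.diff_mem (hsub hCA) (hsub hBA))
      (hμ.isSetField.diff_mem (hsub hCB) (hsub hBB))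
    linarith

theorem pjField_superset {𝒜' : Set (Set X)} (hμ : IsCharge 𝒜 μ) :
    𝒜' ⊆ pjField 𝒜' μ := by
  intro A hA ε hε
  refine ⟨A, hA, A, hA, Subset.rfl, Subset.rfl, ?_⟩
  simpa [hμ.empty] using hε

theorem pjField_subset {𝒜' : Set (Set X)} (hμ : IsCharge 𝒜 μ) (hpj : pjField 𝒜 μ = 𝒜)
    (hsub : 𝒜' ⊆ 𝒜) : pjField 𝒜' μ ⊆ 𝒜 := by
  intro A hA
  rw [← hpj]
  intro ε hε
  obtain ⟨B, hB, C, hC, h1, h2, h3⟩ := hA ε hε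
  exact ⟨B, hsub hB, C, hsub hC, h1, h2, h3⟩

theorem pjField_oc_le {𝒜' : Set (Set X)} {E : Set X} (hμ : IsCharge 𝒜 μ) (hsub : 𝒜' ⊆ 𝒜)
    (hE : E ∈ pjField 𝒜' μ) : outerCharge 𝒜' μ E ≤ outerCharge 𝒜 μ E := by
  apply le_of_forall_pos_le_add
  intro δ hδ
  obtain ⟨B, hB, C, hC, hBE, hEC, hμCB⟩ := hE δ hδ
  have h1 : outerCharge 𝒜' μ E ≤ μ C := oc_le_of_cover hμ hsub hC hEC
  have h2 : μ C = μ B + μ (C \ B) := by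
    have := hμ.diff_eq (hsub hB) (hsub hC) (hBE.trans hEC)
    linarith
  have h3 : μ B ≤ outerCharge 𝒜 μ E := by
    rw [mu_eq_oc hμ (hsub hB)]
    exact oc_mono hμ Subset.rfl hμ.isSetField hBE
  linarith

end Aux2
section Aux3

open Filter Set Topology

variable {X : Type*} {ℬ : Set (Set X)} {μ : Set X → ℝ} {f g : X → ℝ}

theorem partition_exists_mem {n : ℕ} {A : Fin n → Set X} (hcover : (⋃ k, A k) = Set.univ)
    (x : X) : ∃ k, x ∈ A k := by
  have : x ∈ ⋃ k, A k := hcover ▸ Set.mem_univ x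
  exact Set.mem_iUnion.1 this

theorem partition_sum_eq {n : ℕ} {A : Fin n → Set X} {c : Fin n → ℝ}
    (hdisj : Pairwise fun i j => Disjoint (A i) (A j)) {x : X} {k : Fin n} (hx : x ∈ A k) :
    (∑ j, (A j).indicator (fun _ => c j) x) = c k := by
  rw [Finset.sum_eq_single k]
  · simp [Set.indicator_of_mem hx]
  · intro j _ hj
    have hdis : Disjoint (A j) (A k) := hdisj hj
    have : x ∉ A j := fun hxj => (Set.disjoint_left.1 hdis hxj) hx
    simp [Set.indicator_of_notMem this]
  · intro h; exact absurd (Finset.mem_univ k) h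

theorem simple_eval {n : ℕ} {A : Fin n → Set X} {c : Fin n → ℝ}
    (hdisj : Pairwise fun i j => Disjoint (A i) (A j))
    (hval : ∀ x, f x = ∑ j, (A j).indicator (fun _ => c j) x)
    {x : X} {k : Fin n} (hx : x ∈ A k) : f x = c k := by
  rw [hval x, partition_sum_eq hdisj hx]

theorem simple_of_partition {n : ℕ} {A : Fin n → Set X} {c : Fin n → ℝ}
    (hmem : ∀ k, A k ∈ ℬ) (hdisj : Pairwise fun i j => Disjoint (A i) (A j))
    (hcover : (⋃ k, A k) = Set.univ) (hval : ∀ k x, x ∈ A k → f x = c k) :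
    IsSimpleFn ℬ f := by
  refine ⟨n, c, A, hmem, hdisj, hcover, fun x => ?_⟩
  obtain ⟨k, hk⟩ := partition_exists_mem hcover x
  rw [partition_sum_eq hdisj hk]
  exact hval k x hk

theorem simple_mono {ℬ' : Set (Set X)} (h : ℬ ⊆ ℬ') (hf : IsSimpleFn ℬ f) :
    IsSimpleFn ℬ' f := by
  obtain ⟨n, c, A, hmem, hdisj, hcover, hval⟩ := hf
  exact ⟨n, c, A, fun k => h (hmem k), hdisj, hcover, hval⟩

theorem simple_comb (hℬ : IsSetField ℬ) (op : ℝ → ℝ → ℝ) (hf : IsSimpleFn ℬ f)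
    (hg : IsSimpleFn ℬ g) : IsSimpleFn ℬ (fun x => op (f x) (g x)) := by
  obtain ⟨n, c, A, hmem, hdisj, hcover, hval⟩ := hf
  obtain ⟨m, d, B, hmem', hdisj', hcover', hval'⟩ := hg
  classical
  let e := finProdFinEquiv (m := n) (n := m)
  refine simple_of_partition (n := n * m)
    (A := fun k => A (e.symm k).1 ∩ B (e.symm k).2)
    (c := fun k => op (c (e.symm k).1) (d (e.symm k).2))
    (fun k => hℬ.inter_mem (hmem _) (hmem' _)) ?_ ?_ ?_
  · intro k l hkl
    have : (e.symm k).1 ≠ (e.symm l).1 ∨ (e.symm k).2 ≠ (e.symm l).2 := by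
      by_contra hcon
      push_neg at hcon
      exact hkl (by
        have : e.symm k = e.symm l := Prod.ext hcon.1 hcon.2
        simpa using congrArg e this)
    rcases this with h | h
    · exact Set.disjoint_of_subset Set.inter_subset_left Set.inter_subset_left (hdisj h)
    · exact Set.disjoint_of_subset Set.inter_subset_right Set.inter_subset_right (hdisj' h)
  · apply Set.eq_univ_of_forall
    intro x
    obtain ⟨i, hi⟩ := partition_exists_mem hcover x
    obtain ⟨j, hj⟩ := partition_exists_mem hcover' x
    apply Set.mem_iUnion.2
    refine ⟨e (i, j), ?_⟩
    simp only [Equiv.symm_apply_apply]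
    exact ⟨hi, hj⟩
  · intro k x hx
    rw [simple_eval hdisj hval hx.1, simple_eval hdisj' hval' hx.2]

theorem simple_map (hf : IsSimpleFn ℬ f) (φ : ℝ → ℝ) : IsSimpleFn ℬ (fun x => φ (f x)) := by
  obtain ⟨n, c, A, hmem, hdisj, hcover, hval⟩ := hf
  exact simple_of_partition (c := fun k => φ (c k)) hmem hdisj hcover
    (fun k x hx => by rw [simple_eval hdisj hval hx])

theorem simple_superlevel (hℬ : IsSetField ℬ) (hf : IsSimpleFn ℬ f) (a : ℝ) :
    {x | a < f x} ∈ ℬ := by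
  obtain ⟨n, c, A, hmem, hdisj, hcover, hval⟩ := hf
  classical
  have : {x | a < f x} = ⋃ k ∈ Finset.filter (fun k => a < c k) Finset.univ, A k := by
    ext x
    simp only [Set.mem_setOf_eq, Set.mem_iUnion, Finset.mem_filter, Finset.mem_univ, true_and]
    constructor
    · intro hx
      obtain ⟨k, hk⟩ := partition_exists_mem hcover x
      exact ⟨k, by rwa [← simple_eval hdisj hval hk], hk⟩
    · rintro ⟨k, hck, hk⟩
      rw [simple_eval hdisj hval hk]
      exact hck
  rw [this]
  exact hℬ.biUnion_mem _ _ fun k _ => hmem k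

theorem simple_bounded (hf : IsSimpleFn ℬ f) : ∃ M : ℝ, ∀ x, |f x| ≤ M := by
  obtain ⟨n, c, A, hmem, hdisj, hcover, hval⟩ := hf
  refine ⟨∑ k, |c k|, fun x => ?_⟩
  obtain ⟨k, hk⟩ := partition_exists_mem hcover x
  rw [simple_eval hdisj hval hk]
  exact Finset.single_le_sum (f := fun k => |c k|) (fun j _ => abs_nonneg _) (Finset.mem_univ k)

end Aux3
section Aux4

open Filter Set Topology

variable {X : Type*} {𝒜 ℬ ℬ₁ ℬ₂ : Set (Set X)} {μ : Set X → ℝ} {f : X → ℝ}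

theorem mu_biUnion_le (hμ : IsCharge 𝒜 μ) {ι : Type*} (t : Finset ι) (E : ι → Set X)
    (hE : ∀ i ∈ t, E i ∈ 𝒜) : μ (⋃ i ∈ t, E i) ≤ ∑ i ∈ t, μ (E i) := by
  classical
  induction t using Finset.induction_on with
  | empty => simp [hμ.empty]
  | insert a s hnot ih =>
    rw [Finset.set_biUnion_insert, Finset.sum_insert hnot]
    have h1 := hμ.subadd (hE a (Finset.mem_insert_self a s))
      (hμ.isSetField.biUnion_mem s E fun i hi => hE i (Finset.mem_insert_of_mem hi))
    have h2 := ih fun i hi => hE i (Finset.mem_insert_of_mem hi)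
    linarith

theorem oc_null_biUnion (hμ : IsCharge 𝒜 μ) (hℬ : ℬ ⊆ 𝒜) (hℬf : IsSetField ℬ)
    {ι : Type*} (t : Finset ι) (E : ι → Set X)
    (hE : ∀ i ∈ t, outerCharge ℬ μ (E i) = 0) : outerCharge ℬ μ (⋃ i ∈ t, E i) = 0 := by
  classical
  induction t using Finset.induction_on with
  | empty => simpa using oc_empty hμ hℬ hℬf
  | insert a s hnot ih =>
    rw [Finset.set_biUnion_insert]
    exact oc_null_union hμ hℬ hℬf (hE a (Finset.mem_insert_self a s))
      (ih fun i hi => hE i (Finset.mem_insert_of_mem hi))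

theorem partition_surgery (hℬ : IsSetField ℬ) {n : ℕ} (A A' : Fin n → Set X)
    (hdisj : Pairwise fun i j => Disjoint (A i) (A j)) (hcover : (⋃ k, A k) = univ)
    (hA' : ∀ k, A' k ∈ ℬ) :
    ∃ B : Fin n → Set X, (∀ k, B k ∈ ℬ) ∧ (Pairwise fun i j => Disjoint (B i) (B j)) ∧
      (⋃ k, B k) = univ ∧
      ∀ x, x ∉ (⋃ k, ((A k \ A' k) ∪ (A' k \ A k))) → ∀ k, (x ∈ B k ↔ x ∈ A k) := by
  classical
  match n with
  | 0 =>
    exact ⟨A, (fun k => Fin.elim0 k), hdisj, hcover, fun x _ k => Fin.elim0 k⟩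
  | (m+1) =>
    set C : Fin (m+1) → Set X :=
      fun k => A' k \ ⋃ j ∈ Finset.filter (fun j => j < k) Finset.univ, A' j with hC
    have hCmem : ∀ k, C k ∈ ℬ := fun k =>
      hℬ.diff_mem (hA' k) (hℬ.biUnion_mem _ _ fun j _ => hA' j)
    set B : Fin (m+1) → Set X :=
      fun k => if k = 0 then (⋃ j ∈ Finset.filter (fun j => j ≠ 0) Finset.univ, C j)ᶜ
        else C k with hB
    have hBmem : ∀ k, B k ∈ ℬ := by
      intro k
      by_cases hk : k = 0
      · simp only [hB, hk, if_pos rfl]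
        exact hℬ.compl_mem _ (hℬ.biUnion_mem _ _ fun j _ => hCmem j)
      · simp only [hB, if_neg hk]; exact hCmem k
    have hCdisj : ∀ i j : Fin (m+1), i ≠ j → Disjoint (C i) (C j) := by
      intro i j hij
      rcases lt_or_gt_of_ne hij with h | h
      · -- i < j : C j avoids A' i ⊇ C i
        rw [Set.disjoint_right]
        intro x hxj hxi
        have hxAi : x ∈ A' i := hxi.1
        exact hxj.2 (Set.mem_biUnion (Finset.mem_filter.2 ⟨Finset.mem_univ i, h⟩) hxAi)
      · rw [Set.disjoint_left]
        intro x hxi hxj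
        have hxAj : x ∈ A' j := hxj.1
        exact hxi.2 (Set.mem_biUnion (Finset.mem_filter.2 ⟨Finset.mem_univ j, h⟩) hxAj)
    have hBdisj : Pairwise fun i j => Disjoint (B i) (B j) := by
      intro i j hij
      by_cases hi : i = 0
      · have hj : j ≠ 0 := by rw [hi] at hij; exact fun h => hij h.symm
        simp only [hB, hi, if_pos rfl, if_neg hj]
        rw [Set.disjoint_left]
        intro x hx hxj
        exact hx (Set.mem_biUnion (Finset.mem_filter.2 ⟨Finset.mem_univ j, hj⟩) hxj)
      · by_cases hj : j = 0
        · simp only [hB, if_neg hi, hj, if_pos rfl]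
          rw [Set.disjoint_right]
          intro x hx hxi
          exact hx (Set.mem_biUnion (Finset.mem_filter.2 ⟨Finset.mem_univ i, hi⟩) hxi)
        · simp only [hB, if_neg hi, if_neg hj]
          exact hCdisj i j hij
    have hBcover : (⋃ k, B k) = univ := by
      apply Set.eq_univ_of_forall
      intro x
      by_cases hx : x ∈ ⋃ j ∈ Finset.filter (fun j => j ≠ (0 : Fin (m+1))) Finset.univ, C j
      · obtain ⟨j, hj, hxj⟩ := Set.mem_iUnion₂.1 hx
        have hj0 : j ≠ 0 := (Finset.mem_filter.1 hj).2
        exact Set.mem_iUnion.2 ⟨j, by simp only [hB, if_neg hj0]; exact hxj⟩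
      · exact Set.mem_iUnion.2 ⟨0, by simp only [hB, if_pos rfl]; exact hx⟩
    refine ⟨B, hBmem, hBdisj, hBcover, ?_⟩
    intro x hxN
    have hiff : ∀ k, x ∈ A k ↔ x ∈ A' k := by
      intro k
      constructor
      · intro h
        by_contra h'
        exact hxN (Set.mem_iUnion.2 ⟨k, Or.inl ⟨h, h'⟩⟩)
      · intro h
        by_contra h'
        exact hxN (Set.mem_iUnion.2 ⟨k, Or.inr ⟨h, h'⟩⟩)
    obtain ⟨k0, hk0⟩ := partition_exists_mem hcover x
    have hnot : ∀ j, j ≠ k0 → x ∉ A j := by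
      intro j hj hxj
      exact (Set.disjoint_left.1 (hdisj hj) hxj) hk0
    have hnotA' : ∀ j, j ≠ k0 → x ∉ A' j := fun j hj hxj => hnot j hj ((hiff j).2 hxj)
    have hxA'k0 : x ∈ A' k0 := (hiff k0).1 hk0
    by_cases hk00 : k0 = 0
    · -- x in no C j for j ≠ 0
      have hnotC : ∀ j, j ≠ (0 : Fin (m+1)) → x ∉ C j := by
        intro j hj hxj
        exact hnotA' j (hk00 ▸ hj) hxj.1
      intro k
      by_cases hk : k = 0
      · simp only [hB, hk, if_pos rfl, Set.mem_compl_iff]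
        constructor
        · intro _; exact hk00 ▸ hk0
        · intro _ hmem
          obtain ⟨j, hj, hxj⟩ := Set.mem_iUnion₂.1 hmem
          exact hnotC j (Finset.mem_filter.1 hj).2 hxj
      · simp only [hB, if_neg hk]
        constructor
        · intro hxC; exact absurd hxC (hnotC k hk)
        · intro hxA; exact absurd hxA (hnot k (fun h => hk (h.trans hk00)))
    · -- k0 ≠ 0 : x ∈ C k0
      have hxC : x ∈ C k0 := by
        refine ⟨hxA'k0, ?_⟩
        intro hmem
        obtain ⟨j, hj, hxj⟩ := Set.mem_iUnion₂.1 hmem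
        have : j ≠ k0 := ne_of_lt (Finset.mem_filter.1 hj).2
        exact hnotA' j this hxj
      have hnotC : ∀ j, j ≠ k0 → x ∉ C j := by
        intro j hj hxj
        exact (Set.disjoint_left.1 (hCdisj j k0 hj) hxj) hxC
      intro k
      by_cases hk : k = 0
      · simp only [hB, hk, if_pos rfl, Set.mem_compl_iff]
        constructor
        · intro hxn
          exact absurd (Set.mem_biUnion (Finset.mem_filter.2 ⟨Finset.mem_univ k0, hk00⟩) hxC) hxn
        · intro hxA
          exact absurd hxA (hnot 0 (fun h => hk00 h.symm))
      · simp only [hB, if_neg hk]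
        by_cases hkk : k = k0
        · rw [hkk]; exact ⟨fun _ => hk0, fun _ => hxC⟩
        · exact ⟨fun hxc => absurd hxc (hnotC k hkk), fun hxa => absurd hxa (hnot k hkk)⟩

end Aux4
section Aux5

open Filter Set Topology

variable {X : Type*} {𝒜 ℬ : Set (Set X)} {μ : Set X → ℝ} {f g : X → ℝ} {E G : Set X}

theorem simple_null_modify (hμ : IsCharge 𝒜 μ) {𝒜' ℭ : Set (Set X)} (h𝒜' : IsSetField 𝒜')
    (happrox : ∀ A ∈ ℭ, ∃ T ∈ 𝒜', outerCharge 𝒜 μ ((A \ T) ∪ (T \ A)) = 0)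
    (hf : IsSimpleFn ℭ f) :
    ∃ g N, IsSimpleFn 𝒜' g ∧ outerCharge 𝒜 μ N = 0 ∧ ∀ x, x ∉ N → g x = f x := by
  classical
  obtain ⟨n, c, A, hmem, hdisj, hcover, hval⟩ := hf
  choose T hTmem hTnull using fun k => happrox (A k) (hmem k)
  obtain ⟨B, hBmem, hBdisj, hBcover, hBpt⟩ := partition_surgery h𝒜' A T hdisj hcover hTmem
  refine ⟨fun x => ∑ k, (B k).indicator (fun _ => c k) x, ⋃ k, ((A k \ T k) ∪ (T k \ A k)),
    ⟨n, c, B, hBmem, hBdisj, hBcover, fun x => rfl⟩, ?_, ?_⟩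
  · have he : (⋃ k, ((A k \ T k) ∪ (T k \ A k))) =
        ⋃ k ∈ (Finset.univ : Finset (Fin n)), ((A k \ T k) ∪ (T k \ A k)) := by simp
    rw [he]
    exact oc_null_biUnion hμ Subset.rfl hμ.isSetField _ _ fun k _ => hTnull k
  · intro x hx
    rw [hval x]
    refine Finset.sum_congr rfl fun k _ => ?_
    have hiff := hBpt x hx k
    by_cases hxk : x ∈ A k
    · rw [Set.indicator_of_mem (hiff.2 hxk), Set.indicator_of_mem hxk]
    · rw [Set.indicator_of_notMem (fun hc => hxk (hiff.1 hc)), Set.indicator_of_notMem hxk]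

theorem simple_pj_modify (hμ : IsCharge 𝒜 μ) {𝒜' : Set (Set X)} (h𝒜' : IsSetField 𝒜')
    (hsub : 𝒜' ⊆ 𝒜) (hf : IsSimpleFn (pjField 𝒜' μ) f) {δ : ℝ} (hδ : 0 < δ) :
    ∃ g D, IsSimpleFn 𝒜' g ∧ D ∈ 𝒜' ∧ μ D < δ ∧ ∀ x, x ∉ D → g x = f x := by
  classical
  obtain ⟨n, c, A, hmem, hdisj, hcover, hval⟩ := hf
  have hn : (0:ℝ) < δ / (n+1) := by positivity
  choose B hBmem C hCmem hBA hAC hCB using fun k => hmem k (δ/(n+1)) hn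
  obtain ⟨P, hPmem, hPdisj, hPcover, hPpt⟩ := partition_surgery h𝒜' A B hdisj hcover hBmem
  refine ⟨fun x => ∑ k, (P k).indicator (fun _ => c k) x,
    ⋃ k ∈ (Finset.univ : Finset (Fin n)), (C k \ B k),
    ⟨n, c, P, hPmem, hPdisj, hPcover, fun x => rfl⟩,
    h𝒜'.biUnion_mem _ _ fun k _ => h𝒜'.diff_mem (hCmem k) (hBmem k), ?_, ?_⟩
  · have h1 : μ (⋃ k ∈ (Finset.univ : Finset (Fin n)), (C k \ B k)) ≤
        ∑ k : Fin n, μ (C k \ B k) :=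
      mu_biUnion_le hμ _ _ fun k _ => hμ.isSetField.diff_mem (hsub (hCmem k)) (hsub (hBmem k))
    have h2 : ∑ k : Fin n, μ (C k \ B k) ≤ n * (δ/(n+1)) := by
      have := Finset.sum_le_card_nsmul Finset.univ (fun k => μ (C k \ B k)) (δ/(n+1))
        (fun k _ => le_of_lt (hCB k))
      simpa [nsmul_eq_mul] using this
    have h3 : (n : ℝ) * (δ/(n+1)) < δ := by
      rw [div_eq_inv_mul, ← mul_assoc]
      have hlt : (n : ℝ) * ((n:ℝ)+1)⁻¹ < 1 := by
        rw [mul_inv_lt_iff₀ (by positivity)]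
        simp
      nlinarith [hlt, hδ]
    linarith
  · intro x hx
    have hx' : x ∉ ⋃ k, ((A k \ B k) ∪ (B k \ A k)) := by
      intro hc
      obtain ⟨k, hk⟩ := Set.mem_iUnion.1 hc
      apply hx
      rcases hk with h | h
      · exact Set.mem_biUnion (Finset.mem_univ k) ⟨hAC k h.1, h.2⟩
      · exact absurd (hBA k h.1) h.2
    rw [hval x]
    refine Finset.sum_congr rfl fun k _ => ?_
    have hiff := hPpt x hx' k
    by_cases hxk : x ∈ A k
    · rw [Set.indicator_of_mem (hiff.2 hxk), Set.indicator_of_mem hxk]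
    · rw [Set.indicator_of_notMem (fun hc => hxk (hiff.1 hc)), Set.indicator_of_notMem hxk]

/-! ### sIntegral lemmas -/

theorem simple_preimage_mem (hℬ : IsSetField ℬ) (hf : IsSimpleFn ℬ f) (y : ℝ) :
    f ⁻¹' {y} ∈ ℬ := by
  classical
  obtain ⟨n, c, A, hmem, hdisj, hcover, hval⟩ := hf
  have he : f ⁻¹' {y} = ⋃ k ∈ Finset.filter (fun k => c k = y) Finset.univ, A k := by
    ext x
    simp only [Set.mem_preimage, Set.mem_singleton_iff, Set.mem_iUnion, Finset.mem_filter,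
      Finset.mem_univ, true_and]
    constructor
    · intro hx
      obtain ⟨k, hk⟩ := partition_exists_mem hcover x
      exact ⟨k, by rw [← simple_eval hdisj hval hk]; exact hx, hk⟩
    · rintro ⟨k, hck, hk⟩
      rw [simple_eval hdisj hval hk]; exact hck
  rw [he]
  exact hℬ.biUnion_mem _ _ fun k _ => hmem k

theorem mu_split (hμ : IsCharge 𝒜 μ) (hE : E ∈ 𝒜) (hG : G ∈ 𝒜) :
    μ E = μ (E ∩ G) + μ (E \ G) := by
  have hu : E = (E ∩ G) ∪ (E \ G) := by
    ext x; by_cases hx : x ∈ G <;> simp [Set.mem_diff, hx]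
  have hd : Disjoint (E ∩ G) (E \ G) := by
    rw [Set.disjoint_left]; rintro x ⟨-, hxG⟩ ⟨-, hxG'⟩; exact hxG' hxG
  conv_lhs => rw [hu]
  exact hμ.additive _ (hμ.isSetField.inter_mem hE hG) _ (hμ.isSetField.diff_mem hE hG) hd

theorem mu_eq_of_null_diff (hμ : IsCharge 𝒜 μ) (hE : E ∈ 𝒜) (hG : G ∈ 𝒜) {N : Set X}
    (hN : outerCharge 𝒜 μ N = 0) (hEG : ∀ x, x ∉ N → (x ∈ E ↔ x ∈ G)) : μ E = μ G := by
  have h1 : μ (E \ G) = 0 := by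
    refine mu_null_subset hμ (hμ.isSetField.diff_mem hE hG) ?_ hN
    intro x hx
    by_contra hxN
    exact hx.2 ((hEG x hxN).1 hx.1)
  have h2 : μ (G \ E) = 0 := by
    refine mu_null_subset hμ (hμ.isSetField.diff_mem hG hE) ?_ hN
    intro x hx
    by_contra hxN
    exact hx.2 ((hEG x hxN).2 hx.1)
  have h3 := mu_split hμ hE hG
  have h4 := mu_split hμ hG hE
  rw [Set.inter_comm] at h4
  linarith

theorem sIntegral_congr_null (hμ : IsCharge 𝒜 μ) (hf : IsSimpleFn 𝒜 f) (hg : IsSimpleFn 𝒜 g)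
    {N : Set X} (hN : outerCharge 𝒜 μ N = 0) (hfg : ∀ x, x ∉ N → f x = g x) :
    sIntegral μ f = sIntegral μ g := by
  unfold sIntegral
  apply finsum_congr
  intro y
  congr 1
  refine mu_eq_of_null_diff hμ (simple_preimage_mem hμ.isSetField hf y)
    (simple_preimage_mem hμ.isSetField hg y) hN ?_
  intro x hxN
  simp only [Set.mem_preimage, Set.mem_singleton_iff, hfg x hxN]

theorem mu_biUnion_eq (hμ : IsCharge 𝒜 μ) {ι : Type*} (t : Finset ι) (E : ι → Set X)
    (hE : ∀ i ∈ t, E i ∈ 𝒜)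
    (hdisj : ∀ i ∈ t, ∀ j ∈ t, i ≠ j → Disjoint (E i) (E j)) :
    μ (⋃ i ∈ t, E i) = ∑ i ∈ t, μ (E i) := by
  classical
  induction t using Finset.induction_on with
  | empty => simp [hμ.empty]
  | insert a s hnot ih =>
    rw [Finset.set_biUnion_insert, Finset.sum_insert hnot]
    have hdisj2 : Disjoint (E a) (⋃ i ∈ s, E i) := by
      rw [Set.disjoint_iUnion₂_right]
      intro i hi
      exact hdisj a (Finset.mem_insert_self a s) i (Finset.mem_insert_of_mem hi)
        (fun h => hnot (h ▸ hi))
    rw [hμ.additive _ (hE a (Finset.mem_insert_self a s))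
      _ (hμ.isSetField.biUnion_mem s E fun i hi => hE i (Finset.mem_insert_of_mem hi)) hdisj2,
      ih (fun i hi => hE i (Finset.mem_insert_of_mem hi))
        (fun i hi j hj hij => hdisj i (Finset.mem_insert_of_mem hi) j (Finset.mem_insert_of_mem hj) hij)]

theorem simple_chebyshev (hμ : IsCharge 𝒜 μ) (hf : IsSimpleFn 𝒜 f) (hf0 : ∀ x, 0 ≤ f x)
    {t : ℝ} (ht : 0 < t) : t * μ {x | t < f x} ≤ sIntegral μ f := by
  classical
  obtain ⟨n, c, A, hmem, hdisj, hcover, hval⟩ := hf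
  have hsf : IsSimpleFn 𝒜 f := ⟨n, c, A, hmem, hdisj, hcover, hval⟩
  set V : Finset ℝ := Finset.image c Finset.univ with hV
  have hpre : ∀ y, y ∉ V → f ⁻¹' {y} = ∅ := by
    intro y hy
    ext x
    simp only [Set.mem_preimage, Set.mem_singleton_iff, Set.mem_empty_iff_false, iff_false]
    intro hxy
    obtain ⟨k, hk⟩ := partition_exists_mem hcover x
    exact hy (Finset.mem_image.2 ⟨k, Finset.mem_univ k, by rw [← simple_eval hdisj hval hk, hxy]⟩)
  have hint : sIntegral μ f = ∑ y ∈ V, y * μ (f ⁻¹' {y}) := by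
    apply finsum_eq_finset_sum_of_support_subset
    intro y hy
    simp only [Function.mem_support] at hy
    by_contra hyV
    exact hy (by rw [hpre y hyV, hμ.empty, mul_zero])
  have hlevel : {x | t < f x} = ⋃ y ∈ Finset.filter (fun y => t < y) V, f ⁻¹' {y} := by
    ext x
    simp only [Set.mem_setOf_eq, Set.mem_iUnion, Finset.mem_filter, Set.mem_preimage,
      Set.mem_singleton_iff]
    constructor
    · intro hx
      obtain ⟨k, hk⟩ := partition_exists_mem hcover x
      exact ⟨f x, ⟨Finset.mem_image.2 ⟨k, Finset.mem_univ k,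
        (simple_eval hdisj hval hk).symm⟩, hx⟩, rfl⟩
    · rintro ⟨y, ⟨-, hty⟩, rfl⟩
      exact hty
  have hmuE : μ {x | t < f x} = ∑ y ∈ Finset.filter (fun y => t < y) V, μ (f ⁻¹' {y}) := by
    rw [hlevel]
    apply mu_biUnion_eq hμ _ _ (fun y _ => simple_preimage_mem hμ.isSetField hsf y)
    intro y _ z _ hyz
    rw [Set.disjoint_left]
    rintro x hxy hxz
    simp only [Set.mem_preimage, Set.mem_singleton_iff] at hxy hxz
    exact hyz (hxy ▸ hxz ▸ rfl)
  rw [hint, hmuE, Finset.mul_sum]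
  have hstep : ∑ y ∈ Finset.filter (fun y => t < y) V, t * μ (f ⁻¹' {y}) ≤
      ∑ y ∈ Finset.filter (fun y => t < y) V, y * μ (f ⁻¹' {y}) := by
    apply Finset.sum_le_sum
    intro y hy
    have hty := (Finset.mem_filter.1 hy).2
    have hμy : 0 ≤ μ (f ⁻¹' {y}) := hμ.nonneg _ (simple_preimage_mem hμ.isSetField hsf y)
    exact mul_le_mul_of_nonneg_right (le_of_lt hty) hμy
  refine hstep.trans ?_
  apply Finset.sum_le_sum_of_subset_of_nonneg (Finset.filter_subset _ _)
  intro y hyV _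
  rcases le_or_gt 0 y with hy0 | hy0
  · exact mul_nonneg hy0 (hμ.nonneg _ (simple_preimage_mem hμ.isSetField hsf y))
  · have : f ⁻¹' {y} = ∅ := by
      ext x
      simp only [Set.mem_preimage, Set.mem_singleton_iff, Set.mem_empty_iff_false, iff_false]
      intro hxy
      exact absurd (hxy ▸ hf0 x) (not_le.2 hy0)
    rw [this, hμ.empty, mul_zero]
end Aux5
section Aux6

open Filter Set Topology

variable {X : Type*} {𝒜 ℭ : Set (Set X)} {μ : Set X → ℝ} {f : X → ℝ} {A : Set X}

noncomputable def innerCharge (ℬ : Set (Set X)) (μ : Set X → ℝ) (A : Set X) : ℝ :=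
  sSup (μ '' {B | B ∈ ℬ ∧ B ⊆ A})

theorem ic_nonempty (hℭ : IsSetField ℭ) (A : Set X) :
    (μ '' {B | B ∈ ℭ ∧ B ⊆ A}).Nonempty :=
  ⟨μ ∅, ⟨∅, ⟨hℭ.empty_mem, empty_subset A⟩, rfl⟩⟩

theorem ic_bddAbove (hμ : IsCharge 𝒜 μ) (hℭA : ℭ ⊆ 𝒜) (A : Set X) :
    BddAbove (μ '' {B | B ∈ ℭ ∧ B ⊆ A}) := by
  refine ⟨μ univ, ?_⟩
  rintro x ⟨B, ⟨hB, -⟩, rfl⟩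
  exact hμ.mono (hℭA hB) hμ.isSetField.univ_mem (subset_univ B)

theorem ic_le_oc (hμ : IsCharge 𝒜 μ) (hℭ : IsSetField ℭ) (hℭA : ℭ ⊆ 𝒜) (A : Set X) :
    innerCharge ℭ μ A ≤ outerCharge ℭ μ A := by
  apply csSup_le (ic_nonempty hℭ A)
  rintro x ⟨B, ⟨hB, hBA⟩, rfl⟩
  exact oc_ge hμ hℭA hℭ fun C hC hAC => hμ.mono (hℭA hB) (hℭA hC) (hBA.trans hAC)

theorem ic_ge_mem (hμ : IsCharge 𝒜 μ) (hℭA : ℭ ⊆ 𝒜) {B : Set X} (hB : B ∈ ℭ) (hBA : B ⊆ A) :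
    μ B ≤ innerCharge ℭ μ A :=
  le_csSup (ic_bddAbove hμ hℭA A) ⟨B, ⟨hB, hBA⟩, rfl⟩

theorem ic_mono (hμ : IsCharge 𝒜 μ) (hℭ : IsSetField ℭ) (hℭA : ℭ ⊆ 𝒜) {A A' : Set X}
    (h : A ⊆ A') : innerCharge ℭ μ A ≤ innerCharge ℭ μ A' := by
  apply csSup_le_csSup (ic_bddAbove hμ hℭA A') (ic_nonempty hℭ A)
  rintro x ⟨B, ⟨hB, hBA⟩, rfl⟩
  exact ⟨B, ⟨hB, hBA.trans h⟩, rfl⟩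

theorem mem_pjField_of_ic_oc (hμ : IsCharge 𝒜 μ) (hℭ : IsSetField ℭ) (hℭA : ℭ ⊆ 𝒜)
    (h : outerCharge ℭ μ A ≤ innerCharge ℭ μ A) : A ∈ pjField ℭ μ := by
  intro ε hε
  obtain ⟨y, ⟨B, ⟨hB, hBA⟩, rfl⟩, hyB⟩ :=
    exists_lt_of_lt_csSup (ic_nonempty hℭ A)
      (show innerCharge ℭ μ A - ε/2 < innerCharge ℭ μ A by linarith)
  obtain ⟨C, hC, hAC, hμC⟩ := oc_exists_cover hμ hℭ
    (show outerCharge ℭ μ A < outerCharge ℭ μ A + ε/2 by linarith)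
  refine ⟨B, hB, C, hC, hBA, hAC, ?_⟩
  have hBC : B ⊆ C := hBA.trans hAC
  rw [hμ.diff_eq (hℭA hB) (hℭA hC) hBC]
  have := ic_le_oc hμ hℭ hℭA A
  linarith

theorem oc_superlevel_le_ic (hμ : IsCharge 𝒜 μ) (hℭ : IsSetField ℭ) (hℭA : ℭ ⊆ 𝒜)
    {fn : ℕ → X → ℝ} (hsimple : ∀ n, IsSimpleFn ℭ (fn n)) (hconv : HazyConv ℭ μ fn f)
    {c c' : ℝ} (hcc : c' < c) :
    outerCharge ℭ μ {x | c < f x} ≤ innerCharge ℭ μ {x | c' < f x} := by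
  apply le_of_forall_pos_le_add
  intro ε hε
  set δ := (c - c') / 2 with hδdef
  have hδ : 0 < δ := by rw [hδdef]; linarith
  have hev : ∀ᶠ n in atTop, outerCharge ℭ μ {x | δ < |fn n x - f x|} < ε/2 := by
    have h2 := hconv δ hδ
    exact h2.eventually_lt_const (by linarith : (0:ℝ) < ε/2)
  obtain ⟨n, hn⟩ := hev.exists
  obtain ⟨D, hD, hsubD, hμD⟩ := oc_exists_cover hμ hℭ hn
  set L := {x | c - δ < fn n x} with hL
  have hLmem : L ∈ ℭ := simple_superlevel hℭ (hsimple n) (c - δ)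
  have hcover : {x | c < f x} ⊆ L ∪ D := by
    intro x hx
    by_cases hxd : x ∈ D
    · exact Or.inr hxd
    · left
      have hna : ¬ (δ < |fn n x - f x|) := fun hc => hxd (hsubD hc)
      push_neg at hna
      have habs := abs_le.1 hna
      simp only [hL, Set.mem_setOf_eq]
      simp only [Set.mem_setOf_eq] at hx
      linarith [habs.1, habs.2]
  have h1 : outerCharge ℭ μ {x | c < f x} ≤ μ L + μ D := by
    refine (oc_le_of_cover hμ hℭA (hℭ.union_mem _ hLmem _ hD) hcover).trans ?_
    exact hμ.subadd (hℭA hLmem) (hℭA hD)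
  have hLD : L \ D ⊆ {x | c' < f x} := by
    intro x hx
    have hfn : c - δ < fn n x := hx.1
    have hna : ¬ (δ < |fn n x - f x|) := fun hc => hx.2 (hsubD hc)
    push_neg at hna
    have habs := abs_le.1 hna
    simp only [Set.mem_setOf_eq]
    have hc2 : c' = c - 2*δ := by rw [hδdef]; ring
    linarith [habs.1, habs.2]
  have h2 : μ L - μ D ≤ innerCharge ℭ μ {x | c' < f x} := by
    have hsplit := mu_split hμ (hℭA hLmem) (hℭA hD)
    have hint : μ (L ∩ D) ≤ μ D := hμ.mono (hμ.isSetField.inter_mem (hℭA hLmem) (hℭA hD))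
      (hℭA hD) Set.inter_subset_right
    have := ic_ge_mem hμ hℭA (hℭ.diff_mem hLmem hD) hLD
    linarith
  linarith

theorem exists_good_point (hμ : IsCharge 𝒜 μ) (hℭ : IsSetField ℭ) (hℭA : ℭ ⊆ 𝒜)
    {fn : ℕ → X → ℝ} (hsimple : ∀ n, IsSimpleFn ℭ (fn n)) (hconv : HazyConv ℭ μ fn f)
    (a b : ℝ) (hab : a < b) :
    ∃ c, a < c ∧ c < b ∧ {x | c < f x} ∈ pjField ℭ μ := by
  set φ : ℝ → ℝ := fun c => innerCharge ℭ μ {x | c < f x} with hφ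
  have hanti : Antitone φ := by
    intro c c' hcc
    exact ic_mono hμ hℭ hℭA (fun x hx => lt_of_le_of_lt hcc hx)
  have hcount : Set.Countable {x | ¬ContinuousAt φ x} := hanti.countable_not_continuousAt
  have hIoo : ¬ (Set.Ioo a b ⊆ {x | ¬ContinuousAt φ x}) := by
    intro hsubset
    have hcnt : (Set.Ioo a b).Countable := hcount.mono hsubset
    have hvol := hcnt.measure_zero (MeasureTheory.volume : MeasureTheory.Measure ℝ)
    rw [Real.volume_Ioo] at hvol
    have : (0:ℝ) < b - a := by linarith
    simp only [ENNReal.ofReal_eq_zero, not_lt] at hvol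
    linarith
  obtain ⟨c, hcmem, hccont⟩ : ∃ c ∈ Set.Ioo a b, ContinuousAt φ c := by
    by_contra hcon
    push_neg at hcon
    exact hIoo fun x hx => hcon x hx
  refine ⟨c, hcmem.1, hcmem.2, ?_⟩
  apply mem_pjField_of_ic_oc hμ hℭ hℭA
  have hseq : Tendsto (fun m : ℕ => c - 1/(m+1)) atTop (𝓝 c) := by
    have h0 : Tendsto (fun m : ℕ => 1/((m:ℝ)+1)) atTop (𝓝 0) :=
      tendsto_one_div_add_atTop_nhds_zero_nat
    have := (tendsto_const_nhds (x := c) (f := atTop (α := ℕ))).sub h0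
    simpa using this
  have hcomp : Tendsto (fun m : ℕ => φ (c - 1/(m+1))) atTop (𝓝 (φ c)) :=
    (hccont.tendsto).comp hseq
  apply ge_of_tendsto hcomp
  apply Filter.Eventually.of_forall
  intro m
  apply oc_superlevel_le_ic hμ hℭ hℭA hsimple hconv
  have : (0:ℝ) < 1/((m:ℝ)+1) := by positivity
  linarith

end Aux6
section Aux7

open Filter Set Topology

variable {X : Type*} {𝒜 F : Set (Set X)} {μ : Set X → ℝ}

noncomputable def nestedAux (q : ℕ → ℝ) (T : ℕ → Set X) : ℕ → Set X
  | n =>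
    (T n ∩ ⋂ j ∈ (((Finset.range n).filter fun j => q j < q n)).attach,
        nestedAux q T j.1) ∪
      ⋃ j ∈ (((Finset.range n).filter fun j => q n < q j)).attach, nestedAux q T j.1
  decreasing_by
  · exact Finset.mem_range.1 (Finset.mem_filter.1 j.2).1
  · exact Finset.mem_range.1 (Finset.mem_filter.1 j.2).1

theorem nestedAux_def (q : ℕ → ℝ) (T : ℕ → Set X) (n : ℕ) :
    nestedAux q T n =
      (T n ∩ ⋂ j ∈ (((Finset.range n).filter fun j => q j < q n)).attach,
          nestedAux q T j.1) ∪
        ⋃ j ∈ (((Finset.range n).filter fun j => q n < q j)).attach, nestedAux q T j.1 := by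
  rw [nestedAux]

theorem nestedAux_mem (hF : IsSetField F) (q : ℕ → ℝ) (T : ℕ → Set X)
    (hT : ∀ n, T n ∈ F) : ∀ n, nestedAux q T n ∈ F := by
  intro n
  induction n using Nat.strong_induction_on with
  | _ n ih =>
    rw [nestedAux_def]
    refine hF.union_mem _ (hF.inter_mem (hT n) ?_) _ ?_
    · exact hF.biInter_mem _ _ fun j _ => ih j.1 (Finset.mem_range.1 (Finset.mem_filter.1 j.2).1)
    · exact hF.biUnion_mem _ _ fun j _ => ih j.1 (Finset.mem_range.1 (Finset.mem_filter.1 j.2).1)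

theorem nestedAux_nested (q : ℕ → ℝ) (T : ℕ → Set X) :
    ∀ i j, q i < q j → nestedAux q T j ⊆ nestedAux q T i := by
  have key : ∀ n, ∀ i < n, (q i < q n → nestedAux q T n ⊆ nestedAux q T i) ∧
      (q n < q i → nestedAux q T i ⊆ nestedAux q T n) := by
    intro n
    induction n using Nat.strong_induction_on with
    | _ n ih =>
      intro i hin
      constructor
      · intro hq
        rw [nestedAux_def q T n]
        rintro x (⟨-, hx⟩ | hx)
        · have hmem : i ∈ ((Finset.range n).filter fun j => q j < q n) :=
            Finset.mem_filter.2 ⟨Finset.mem_range.2 hin, hq⟩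
          exact Set.mem_iInter₂.1 hx ⟨i, hmem⟩ (Finset.mem_attach _ _)
        · obtain ⟨j, -, hxj⟩ := Set.mem_iUnion₂.1 hx
          have hj := Finset.mem_filter.1 j.2
          have hjn : j.1 < n := Finset.mem_range.1 hj.1
          have hqij : q i < q j.1 := lt_trans hq hj.2
          rcases lt_trichotomy i j.1 with hij | hij | hij
          · exact (ih j.1 hjn i hij).1 hqij hxj
          · exact absurd hqij (by rw [hij]; exact lt_irrefl _)
          · exact (ih i hin j.1 hij).2 hqij hxj
      · intro hq
        rw [nestedAux_def q T n]
        intro x hx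
        right
        have hmem : i ∈ ((Finset.range n).filter fun j => q n < q j) :=
          Finset.mem_filter.2 ⟨Finset.mem_range.2 hin, hq⟩
        exact Set.mem_biUnion (Finset.mem_attach _ ⟨i, hmem⟩) hx
  intro i j hq
  rcases lt_trichotomy i j with hij | hij | hij
  · exact (key j i hij).1 hq
  · exact absurd hq (by rw [hij]; exact lt_irrefl _)
  · exact (key i j hij).2 hq

theorem nestedAux_null (hμ : IsCharge 𝒜 μ) (q : ℕ → ℝ) (S : ℝ → Set X)
    (hSanti : ∀ c c' : ℝ, c ≤ c' → S c' ⊆ S c) (T : ℕ → Set X)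
    (hTnull : ∀ n, outerCharge 𝒜 μ ((T n \ S (q n)) ∪ (S (q n) \ T n)) = 0) :
    ∀ n, outerCharge 𝒜 μ ((nestedAux q T n \ S (q n)) ∪ (S (q n) \ nestedAux q T n)) = 0 := by
  have hAf := hμ.isSetField
  intro n
  induction n using Nat.strong_induction_on with
  | _ n ih =>
    set T' := nestedAux q T with hT'
    have hsub : (T' n \ S (q n)) ∪ (S (q n) \ T' n) ⊆
        ((T n \ S (q n)) ∪ (S (q n) \ T n)) ∪
          ⋃ j ∈ Finset.range n, ((T' j \ S (q j)) ∪ (S (q j) \ T' j)) := by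
      rintro x (⟨hx1, hx2⟩ | ⟨hx1, hx2⟩)
      · rw [hT', nestedAux_def] at hx1
        rcases hx1 with ⟨hxT, -⟩ | hx1
        · exact Or.inl (Or.inl ⟨hxT, hx2⟩)
        · obtain ⟨j, -, hxj⟩ := Set.mem_iUnion₂.1 hx1
          have hj := Finset.mem_filter.1 j.2
          have hxSj : x ∉ S (q j.1) := by
            intro hc
            exact hx2 (hSanti (q n) (q j.1) (le_of_lt hj.2) hc)
          exact Or.inr (Set.mem_biUnion hj.1 (Or.inl ⟨hxj, hxSj⟩))
      · rw [hT', nestedAux_def] at hx2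
        simp only [Set.mem_union, not_or] at hx2
        obtain ⟨hx2a, hx2b⟩ := hx2
        by_cases hxT : x ∈ T n
        · have : x ∉ ⋂ j ∈ (((Finset.range n).filter fun j => q j < q n)).attach, T' j.1 := by
            intro hc
            exact hx2a ⟨hxT, hc⟩
          obtain ⟨j, hxj⟩ : ∃ j : {j // j ∈ (Finset.range n).filter fun j => q j < q n},
              x ∉ T' j.1 := by
            by_contra hcon
            push_neg at hcon
            exact this (Set.mem_iInter₂.2 fun j _ => hcon j)
          have hj := Finset.mem_filter.1 j.2
          have hxSj : x ∈ S (q j.1) := hSanti (q j.1) (q n) (le_of_lt hj.2) hx1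
          exact Or.inr (Set.mem_biUnion hj.1 (Or.inr ⟨hxSj, hxj⟩))
        · exact Or.inl (Or.inr ⟨hx1, hxT⟩)
    refine oc_null_of_subset hμ Subset.rfl hAf hsub ?_
    refine oc_null_union hμ Subset.rfl hAf (hTnull n) ?_
    exact oc_null_biUnion hμ Subset.rfl hAf _ _ fun j hj => ih j (Finset.mem_range.1 hj)

theorem tendsto_zero_of_forall_lt {u : ℕ → ℝ} (h0 : ∀ n, 0 ≤ u n)
    (h : ∀ β > (0:ℝ), ∀ᶠ n in atTop, u n < β) : Tendsto u atTop (𝓝 0) := by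
  rw [Metric.tendsto_atTop]
  intro ε hε
  obtain ⟨N, hN⟩ := (h ε hε).exists_forall_of_atTop
  exact ⟨N, fun n hn => by
    rw [Real.dist_eq, sub_zero, abs_of_nonneg (h0 n)]
    exact hN n hn⟩

theorem rpow_abs_uniform (p K ε : ℝ) (hK : 0 < K) (hε : 0 < ε) (hp : 0 ≤ p) :
    ∃ η > 0, ∀ a b : ℝ, |a| ≤ K → |b| ≤ K → |a - b| ≤ η → abs (|a| ^ p - |b| ^ p) ≤ ε := by
  have hcont : Continuous fun t : ℝ => |t| ^ p := by
    apply continuous_iff_continuousAt.2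
    intro t
    exact (Real.continuousAt_rpow_const _ _ (Or.inr hp)).comp (continuous_abs.continuousAt)
  have huc : UniformContinuousOn (fun t : ℝ => |t| ^ p) (Set.Icc (-K) K) :=
    (isCompact_Icc).uniformContinuousOn_of_continuous hcont.continuousOn
  rw [Metric.uniformContinuousOn_iff] at huc
  obtain ⟨η, hη, hηspec⟩ := huc (ε/2) (by linarith)
  refine ⟨η/2, by linarith, fun a b ha hb hab => ?_⟩
  have hmem : ∀ t : ℝ, |t| ≤ K → t ∈ Set.Icc (-K) K := fun t ht =>
    ⟨neg_le_of_abs_le ht, le_of_abs_le ht⟩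
  have := hηspec a (hmem a ha) b (hmem b hb)
    (by rw [Real.dist_eq]; linarith)
  rw [Real.dist_eq] at this
  linarith

end Aux7
section Aux8

open Filter Set Topology

variable {X : Type*} {𝒜 𝒜' ℭ : Set (Set X)} {μ : Set X → ℝ} {f : X → ℝ}

/-- All data of the nested good-level-set construction. -/
structure GoodGrid {X : Type*} (𝒜 F 𝒞 : Set (Set X)) (μ : Set X → ℝ) (f : X → ℝ) where
  q : ℕ → ℝ
  T' : ℕ → Set X
  L : ℕ → ℕ
  k : ℕ → ℕ → ℕ
  Kb : ℕ → ℝ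
  T'mem : ∀ n, T' n ∈ F
  T'null : ∀ n, outerCharge 𝒜 μ ((T' n \ {x | q n < f x}) ∪ ({x | q n < f x} \ T' n)) = 0
  nest : ∀ i j, q i < q j → T' j ⊆ T' i
  Lge : ∀ m, 2 ≤ L m
  qmono : ∀ m, ∀ i j, i < j → j < L m → q (k m i) < q (k m j)
  gap : ∀ m i, i + 1 < L m → q (k m (i+1)) - q (k m i) ≤ 2/(m+1)
  Kpos : ∀ m, 0 < Kb m
  Ksm : ∀ m, outerCharge 𝒞 μ {x | Kb m < |f x|} < 1/(m+1)
  lo : ∀ m, q (k m 0) < -(Kb m) - 1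
  hi : ∀ m, Kb m + 1 < q (k m (L m - 1))

theorem memL0_smooth (hμ : IsCharge 𝒜 μ) (hℭf : IsSetField ℭ) (hℭA : ℭ ⊆ 𝒜)
    (hf : MemL0 ℭ μ f) : ∀ δ > (0:ℝ), ∃ K > (0:ℝ), outerCharge ℭ μ {x | K < |f x|} < δ := by
  obtain ⟨fn, hsimple, hconv⟩ := hf
  intro δ hδ
  obtain ⟨n, hn⟩ := ((hconv 1 one_pos).eventually_lt_const hδ).exists
  obtain ⟨M, hM⟩ := simple_bounded (hsimple n)
  refine ⟨|M| + 1, by positivity, ?_⟩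
  refine lt_of_le_of_lt (oc_mono hμ hℭA hℭf ?_) hn
  intro x hx
  simp only [Set.mem_setOf_eq] at hx ⊢
  have h1 := hM x
  have h2 : |f x| - |fn n x| ≤ |fn n x - f x| := by
    have := abs_sub_abs_le_abs_sub (f x) (fn n x)
    rw [abs_sub_comm] at this
    linarith
  have h3 : |M| ≥ M := le_abs_self M
  linarith

theorem C_subset_A (hμ : IsCharge 𝒜 μ) (hpj : pjField 𝒜 μ = 𝒜) (hsub : 𝒜' ⊆ 𝒜) :
    genSetField (𝒜' ∪ nullSets 𝒜 μ) ⊆ 𝒜 :=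
  genSetField_le hμ.isSetField (Set.union_subset hsub (nullSets_subset hμ hpj))

theorem goodGrid_exists (hμ : IsCharge 𝒜 μ) (hpj : pjField 𝒜 μ = 𝒜)
    (h𝒜' : IsSetField 𝒜') (hsub : 𝒜' ⊆ 𝒜)
    (hcond : pjField (genSetField (𝒜' ∪ nullSets 𝒜 μ)) μ =
      genSetField (pjField 𝒜' μ ∪ nullSets 𝒜 μ))
    (hf : MemL0 (genSetField (𝒜' ∪ nullSets 𝒜 μ)) μ f) :
    Nonempty (GoodGrid 𝒜 (pjField 𝒜' μ) (genSetField (𝒜' ∪ nullSets 𝒜 μ)) μ f) := by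
  classical
  set 𝒞 := genSetField (𝒜' ∪ nullSets 𝒜 μ) with h𝒞
  have h𝒞f : IsSetField 𝒞 := genSetField_isSetField _
  have h𝒞A : 𝒞 ⊆ 𝒜 := C_subset_A hμ hpj hsub
  have hFf : IsSetField (pjField 𝒜' μ) := pjField_isSetField hμ hsub h𝒜'
  obtain ⟨fn, hsimple, hconv⟩ := hf
  -- smoothness: Kb
  have hsm := memL0_smooth hμ h𝒞f h𝒞A ⟨fn, hsimple, hconv⟩
  have hKb : ∀ m : ℕ, ∃ K > (0:ℝ), outerCharge 𝒞 μ {x | K < |f x|} < 1/(m+1) := by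
    intro m
    exact hsm (1/(m+1)) (by positivity)
  choose Kb hKpos hKsm using hKb
  -- good points
  have hgood : ∀ a b : ℝ, a < b → ∃ c, a < c ∧ c < b ∧ {x | c < f x} ∈ pjField 𝒞 μ :=
    fun a b hab => exists_good_point hμ h𝒞f h𝒞A hsimple hconv a b hab
  set R : ℕ → ℕ := fun m => ⌈Kb m⌉₊ + 2 with hR
  set xm : ℕ → ℕ → ℝ := fun m i => (i:ℝ)/((m:ℝ)+1) - (R m : ℝ) with hxm
  have hxmlt : ∀ m i j, i < j → xm m i < xm m j := by
    intro m i j hij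
    simp only [hxm]
    have hc : (i:ℝ) < (j:ℝ) := by exact_mod_cast hij
    have hm : (0:ℝ) < (m:ℝ)+1 := by positivity
    have hdiv := (div_lt_div_iff_of_pos_right hm).2 hc
    linarith
  have hxmstep : ∀ m i, xm m (i+1) - xm m i = 1/((m:ℝ)+1) := by
    intro m i
    simp only [hxm]
    push_cast
    field_simp
    ring
  choose cpt hcpt1 hcpt2 hcpt3 using fun m i => hgood (xm m i) (xm m (i+1)) (hxmlt m i (i+1) (Nat.lt_succ_self i))
  set q : ℕ → ℝ := fun n => cpt (Nat.unpair n).1 (Nat.unpair n).2 with hq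
  have hqgood : ∀ n, {x | q n < f x} ∈ pjField 𝒞 μ := fun n => hcpt3 _ _
  -- T sets
  have happrox : ∀ n, ∃ T ∈ pjField 𝒜' μ,
      outerCharge 𝒜 μ ((T \ {x | q n < f x}) ∪ ({x | q n < f x} \ T)) = 0 := by
    intro n
    have hmem : {x | q n < f x} ∈ genSetField (pjField 𝒜' μ ∪ nullSets 𝒜 μ) := by
      rw [← hcond]; exact hqgood n
    obtain ⟨T, hT, hnull⟩ := genSetField_null_approx hμ hFf hmem
    refine ⟨T, hT, ?_⟩
    rwa [Set.union_comm] at hnull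
  choose T hTmem hTnull using happrox
  have hSanti : ∀ c c' : ℝ, c ≤ c' → {x | c' < f x} ⊆ {x | c < f x} :=
    fun c c' hcc x hx => lt_of_le_of_lt hcc hx
  clear_value R xm q
  refine ⟨⟨q, nestedAux q T, fun m => 2 * R m * (m+1), fun m i => Nat.pair m i, Kb,
    nestedAux_mem hFf q T hTmem,
    nestedAux_null hμ q (fun c => {x | c < f x}) hSanti T hTnull,
    nestedAux_nested q T, ?_, ?_, ?_, hKpos, hKsm, ?_, ?_⟩⟩
  · intro m
    have h1 : 2 ≤ R m := by simp [hR]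
    have h2 : 1 ≤ m + 1 := by omega
    calc 2 ≤ 2 * R m := by omega
    _ ≤ 2 * R m * (m+1) := Nat.le_mul_of_pos_right _ (by omega)
  · intro m i j hij hjL
    have hqi : q (Nat.pair m i) = cpt m i := by simp [hq, Nat.unpair_pair]
    have hqj : q (Nat.pair m j) = cpt m j := by simp [hq, Nat.unpair_pair]
    rw [hqi, hqj]
    have h1 : cpt m i < xm m (i+1) := hcpt2 m i
    have h2 : xm m j < cpt m j := hcpt1 m j
    have h3 : xm m (i+1) ≤ xm m j := by
      rcases Nat.eq_or_lt_of_le (Nat.succ_le_of_lt hij) with h | h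
      · exact le_of_eq (congrArg (xm m) h)
      · exact le_of_lt (hxmlt m _ _ h)
    linarith
  · intro m i hiL
    have hqi : q (Nat.pair m i) = cpt m i := by simp [hq, Nat.unpair_pair]
    have hqj : q (Nat.pair m (i+1)) = cpt m (i+1) := by simp [hq, Nat.unpair_pair]
    rw [hqi, hqj]
    have h1 : xm m i < cpt m i := hcpt1 m i
    have h2 : cpt m (i+1) < xm m (i+1+1) := hcpt2 m (i+1)
    have ha := hxmstep m i
    have hb := hxmstep m (i+1)
    have hcc : (2:ℝ)/((m:ℝ)+1) = 1/((m:ℝ)+1) + 1/((m:ℝ)+1) := by ring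
    have hgoal : (2:ℝ)/(↑m+1) = 2/((m:ℝ)+1) := rfl
    rw [hgoal, hcc]
    linarith
  · intro m
    have hqi : q (Nat.pair m 0) = cpt m 0 := by simp [hq, Nat.unpair_pair]
    rw [hqi]
    have h1 : cpt m 0 < xm m 1 := hcpt2 m 0
    have h2 : xm m 1 = 1/((m:ℝ)+1) - (R m : ℝ) := by simp [hxm]
    have h3 : (R m : ℝ) ≥ Kb m + 2 := by
      simp only [hR]
      push_cast
      have := Nat.le_ceil (Kb m)
      linarith
    have h4 : 1/((m:ℝ)+1) ≤ 1 := by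
      rw [div_le_one (by positivity)]
      simp
    linarith
  · intro m
    set N := 2 * R m * (m+1) with hN
    have hN1 : 1 ≤ N := by
      have h1 : 2 ≤ R m := by simp [hR]
      calc 1 ≤ 2 * R m := by omega
      _ ≤ 2 * R m * (m+1) := Nat.le_mul_of_pos_right _ (by omega)
    have hqi : q (Nat.pair m (N - 1)) = cpt m (N-1) := by simp [hq, Nat.unpair_pair]
    rw [hqi]
    have h1 : xm m (N-1) < cpt m (N-1) := hcpt1 m (N-1)
    have hcast : ((N - 1 : ℕ):ℝ) = (N:ℝ) - 1 := by
      rw [Nat.cast_sub hN1]; simp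
    have h2 : xm m (N-1) = ((N:ℝ)-1)/((m:ℝ)+1) - (R m : ℝ) := by
      simp only [hxm, hcast]
    have hNr : (N:ℝ) = 2 * (R m : ℝ) * ((m:ℝ)+1) := by
      rw [hN]; push_cast; ring
    have hm : ((m:ℝ)+1) ≠ 0 := by positivity
    have h3 : ((N:ℝ)-1)/((m:ℝ)+1) = 2 * (R m:ℝ) - 1/((m:ℝ)+1) := by
      rw [hNr]
      field_simp
    have h4 : (R m : ℝ) ≥ Kb m + 2 := by
      simp only [hR]
      push_cast
      have := Nat.le_ceil (Kb m)
      linarith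
    have h5 : 1/((m:ℝ)+1) ≤ 1 := by
      rw [div_le_one (by positivity)]
      simp
    have h6 : xm m (N-1) = 2 * (R m:ℝ) - 1/((m:ℝ)+1) - (R m:ℝ) := by rw [h2, h3]
    linarith

end Aux8
section Aux9

open Filter Set Topology

variable {X : Type*} {𝒜 𝒜' F 𝒞 : Set (Set X)} {μ : Set X → ℝ} {f : X → ℝ}

noncomputable def gridFun (G : GoodGrid 𝒜 F 𝒞 μ f) : X → ℝ :=
  fun x => sSup {y | ∃ n, x ∈ G.T' n ∧ G.q n = y}

theorem gridFun_bound (G : GoodGrid 𝒜 F 𝒞 μ f) {m i : ℕ} {x : X} (hi : i + 1 < G.L m)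
    (hx1 : x ∈ G.T' (G.k m i)) (hx2 : x ∉ G.T' (G.k m (i+1))) :
    G.q (G.k m i) ≤ gridFun G x ∧ gridFun G x ≤ G.q (G.k m (i+1)) := by
  have hub : ∀ y ∈ {y | ∃ n, x ∈ G.T' n ∧ G.q n = y}, y ≤ G.q (G.k m (i+1)) := by
    rintro y ⟨n, hxn, rfl⟩
    by_contra hc
    push_neg at hc
    exact hx2 (G.nest _ _ hc hxn)
  have hne : {y | ∃ n, x ∈ G.T' n ∧ G.q n = y}.Nonempty := ⟨G.q (G.k m i), G.k m i, hx1, rfl⟩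
  exact ⟨le_csSup ⟨G.q (G.k m (i+1)), hub⟩ ⟨G.k m i, hx1, rfl⟩, csSup_le hne hub⟩

theorem gridFun_le_top (G : GoodGrid 𝒜 F 𝒞 μ f) {m : ℕ} {x : X}
    (hx : x ∉ G.T' (G.k m (G.L m - 1))) :
    gridFun G x ≤ max (G.q (G.k m (G.L m - 1))) 0 := by
  rcases Set.eq_empty_or_nonempty {y | ∃ n, x ∈ G.T' n ∧ G.q n = y} with he | hne
  · unfold gridFun
    rw [he, Real.sSup_empty]
    exact le_max_right _ _
  · refine le_trans (csSup_le hne ?_) (le_max_left _ _)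
    rintro y ⟨n, hxn, rfl⟩
    by_contra hc
    push_neg at hc
    exact hx (G.nest _ _ hc hxn)

theorem gridFun_ge_bot (G : GoodGrid 𝒜 F 𝒞 μ f) {m : ℕ} {x : X}
    (hx : x ∈ G.T' (G.k m 0)) :
    min (G.q (G.k m 0)) 0 ≤ gridFun G x := by
  by_cases hbdd : BddAbove {y | ∃ n, x ∈ G.T' n ∧ G.q n = y}
  · exact le_trans (min_le_left _ _) (le_csSup hbdd ⟨G.k m 0, hx, rfl⟩)
  · unfold gridFun
    rw [Real.sSup_of_not_bddAbove hbdd]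
    exact min_le_right _ _

theorem grid_T'_oc (hμ : IsCharge 𝒜 μ) (h𝒞f : IsSetField 𝒞) (h𝒞A : 𝒞 ⊆ 𝒜)
    (G : GoodGrid 𝒜 (pjField 𝒜' μ) 𝒞 μ f) (n : ℕ) :
    outerCharge 𝒜 μ (G.T' n) ≤ outerCharge 𝒞 μ {x | G.q n < f x} := by
  have hsub : G.T' n ⊆ {x | G.q n < f x} ∪
      ((G.T' n \ {x | G.q n < f x}) ∪ ({x | G.q n < f x} \ G.T' n)) := by
    intro x hx
    by_cases hxS : x ∈ {x | G.q n < f x}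
    · exact Or.inl hxS
    · exact Or.inr (Or.inl ⟨hx, hxS⟩)
  calc outerCharge 𝒜 μ (G.T' n)
      ≤ outerCharge 𝒜 μ ({x | G.q n < f x} ∪ _) := oc_mono hμ Subset.rfl hμ.isSetField hsub
    _ ≤ outerCharge 𝒜 μ {x | G.q n < f x} +
        outerCharge 𝒜 μ ((G.T' n \ {x | G.q n < f x}) ∪ ({x | G.q n < f x} \ G.T' n)) :=
        oc_subadd hμ Subset.rfl hμ.isSetField _ _
    _ = outerCharge 𝒜 μ {x | G.q n < f x} := by rw [G.T'null n]; ring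
    _ ≤ outerCharge 𝒞 μ {x | G.q n < f x} := oc_anti_field hμ Subset.rfl h𝒞A h𝒞f _

theorem grid_T'c_oc (hμ : IsCharge 𝒜 μ) (h𝒞f : IsSetField 𝒞) (h𝒞A : 𝒞 ⊆ 𝒜)
    (G : GoodGrid 𝒜 (pjField 𝒜' μ) 𝒞 μ f) (n : ℕ) :
    outerCharge 𝒜 μ (G.T' n)ᶜ ≤ outerCharge 𝒞 μ {x | G.q n < f x}ᶜ := by
  have hsub : (G.T' n)ᶜ ⊆ {x | G.q n < f x}ᶜ ∪
      ((G.T' n \ {x | G.q n < f x}) ∪ ({x | G.q n < f x} \ G.T' n)) := by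
    intro x hx
    by_cases hxS : x ∈ {x | G.q n < f x}
    · exact Or.inr (Or.inr ⟨hxS, hx⟩)
    · exact Or.inl hxS
  calc outerCharge 𝒜 μ (G.T' n)ᶜ
      ≤ outerCharge 𝒜 μ ({x | G.q n < f x}ᶜ ∪ _) := oc_mono hμ Subset.rfl hμ.isSetField hsub
    _ ≤ outerCharge 𝒜 μ {x | G.q n < f x}ᶜ +
        outerCharge 𝒜 μ ((G.T' n \ {x | G.q n < f x}) ∪ ({x | G.q n < f x} \ G.T' n)) :=
        oc_subadd hμ Subset.rfl hμ.isSetField _ _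
    _ = outerCharge 𝒜 μ {x | G.q n < f x}ᶜ := by rw [G.T'null n]; ring
    _ ≤ outerCharge 𝒞 μ {x | G.q n < f x}ᶜ := oc_anti_field hμ Subset.rfl h𝒞A h𝒞f _

theorem grid_exc_bound (hμ : IsCharge 𝒜 μ) (hpj : pjField 𝒜 μ = 𝒜) (h𝒜' : IsSetField 𝒜')
    (hsub : 𝒜' ⊆ 𝒜) (h𝒞f : IsSetField 𝒞) (h𝒞A : 𝒞 ⊆ 𝒜)
    (G : GoodGrid 𝒜 (pjField 𝒜' μ) 𝒞 μ f) (m : ℕ) :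
    outerCharge 𝒜' μ (G.T' (G.k m (G.L m - 1)) ∪ (G.T' (G.k m 0))ᶜ) < 2/((m:ℝ)+1) := by
  have hFf : IsSetField (pjField 𝒜' μ) := pjField_isSetField hμ hsub h𝒜'
  have hFA : pjField 𝒜' μ ⊆ 𝒜 := pjField_subset hμ hpj hsub
  set E := G.T' (G.k m (G.L m - 1)) ∪ (G.T' (G.k m 0))ᶜ with hE
  have hEF : E ∈ pjField 𝒜' μ :=
    hFf.union_mem _ (G.T'mem _) _ (hFf.compl_mem _ (G.T'mem _))
  have h1 : outerCharge 𝒜' μ E ≤ outerCharge 𝒜 μ E := pjField_oc_le hμ hsub hEF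
  have h2 : outerCharge 𝒜 μ E ≤ outerCharge 𝒜 μ (G.T' (G.k m (G.L m - 1))) +
      outerCharge 𝒜 μ (G.T' (G.k m 0))ᶜ := oc_subadd hμ Subset.rfl hμ.isSetField _ _
  have h3 : outerCharge 𝒞 μ {x | G.q (G.k m (G.L m - 1)) < f x} ≤
      outerCharge 𝒞 μ {x | G.Kb m < |f x|} := by
    apply oc_mono hμ h𝒞A h𝒞f
    intro x hx
    simp only [Set.mem_setOf_eq] at hx ⊢
    have := G.hi m
    have := le_abs_self (f x)
    linarith
  have h4 : outerCharge 𝒞 μ {x | G.q (G.k m 0) < f x}ᶜ ≤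
      outerCharge 𝒞 μ {x | G.Kb m < |f x|} := by
    apply oc_mono hμ h𝒞A h𝒞f
    intro x hx
    simp only [Set.mem_compl_iff, Set.mem_setOf_eq, not_lt] at hx
    simp only [Set.mem_setOf_eq]
    have := G.lo m
    have := neg_le_abs (f x)
    linarith
  have h5 := grid_T'_oc hμ h𝒞f h𝒞A G (G.k m (G.L m - 1))
  have h6 := grid_T'c_oc hμ h𝒞f h𝒞A G (G.k m 0)
  have h7 := G.Ksm m
  have h8 : 2/((m:ℝ)+1) = 1/((m:ℝ)+1) + 1/((m:ℝ)+1) := by ring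
  rw [h8]
  calc outerCharge 𝒜' μ E ≤ _ := h1
    _ ≤ _ := h2
    _ < 1/((m:ℝ)+1) + 1/((m:ℝ)+1) := by
        have ha := h5.trans h3
        have hb := h6.trans h4
        linarith

end Aux9
section Aux10

open Filter Set Topology

variable {X : Type*} {𝒜 𝒜' 𝒞 : Set (Set X)} {μ : Set X → ℝ} {f : X → ℝ}

theorem exists_two_div_lt {δ : ℝ} (hδ : 0 < δ) : ∃ m : ℕ, 2/((m:ℝ)+1) < δ := by
  obtain ⟨n, hn⟩ := exists_nat_gt (2/δ)
  refine ⟨n, ?_⟩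
  rw [div_lt_iff₀ (by positivity)]
  have h1 : δ * (2/δ) < δ * n := by
    exact mul_lt_mul_of_pos_left hn hδ
  rw [mul_div_cancel₀ 2 (ne_of_gt hδ)] at h1
  nlinarith

theorem grid_partition (hμ : IsCharge 𝒜 μ) (hpj : pjField 𝒜 μ = 𝒜) (h𝒜' : IsSetField 𝒜')
    (hsub : 𝒜' ⊆ 𝒜) (G : GoodGrid 𝒜 (pjField 𝒜' μ) 𝒞 μ f) (m : ℕ) :
    ∃ s : X → ℝ, IsSimpleFn (pjField 𝒜' μ) s ∧
      ∀ x, x ∉ (G.T' (G.k m (G.L m - 1)) ∪ (G.T' (G.k m 0))ᶜ) →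
        |gridFun G x - s x| ≤ 2/((m:ℝ)+1) := by
  classical
  have hFf : IsSetField (pjField 𝒜' μ) := pjField_isSetField hμ hsub h𝒜'
  set N := G.L m with hNdef
  have hN2 : 2 ≤ N := G.Lge m
  set t : ℕ → Set X := fun i => G.T' (G.k m i) with ht
  set v : ℕ → ℝ := fun i => G.q (G.k m i) with hv
  have chain : ∀ i j : ℕ, i ≤ j → j < N → t j ⊆ t i := by
    intro i j hij hj
    rcases Nat.eq_or_lt_of_le hij with h | h
    · rw [h]
    · exact G.nest _ _ (G.qmono m i j h hj)
  set P : Fin (N+1) → Set X := fun i =>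
    if i.1 = 0 then (t 0)ᶜ else if i.1 = N then t (N-1) else t (i.1 - 1) \ t i.1 with hP
  set c : Fin (N+1) → ℝ := fun i => if i.1 = 0 then v 0 else v (i.1 - 1) with hc
  have hPval : ∀ (a : ℕ) (ha : a < N+1), P ⟨a, ha⟩ =
      if a = 0 then (t 0)ᶜ else if a = N then t (N-1) else t (a-1) \ t a := fun a ha => rfl
  have hcval2 : ∀ (a : ℕ) (ha : a < N+1), c ⟨a, ha⟩ = if a = 0 then v 0 else v (a-1) :=
    fun a ha => rfl
  have hPmem : ∀ i, P i ∈ pjField 𝒜' μ := by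
    intro i
    simp only [hP]
    split
    · exact hFf.compl_mem _ (G.T'mem _)
    · split
      · exact G.T'mem _
      · exact hFf.diff_mem (G.T'mem _) (G.T'mem _)
  have hPsub : ∀ i : Fin (N+1), i.1 ≠ 0 → P i ⊆ t (i.1 - 1) := by
    intro i hi
    simp only [hP, if_neg hi]
    split
    · rename_i hiN
      rw [hiN]
    · exact diff_subset
  have hPnotin : ∀ i : Fin (N+1), i.1 ≠ 0 → i.1 ≠ N → ∀ x ∈ P i, x ∉ t i.1 := by
    intro i hi hiN x hx
    simp only [hP, if_neg hi, if_neg hiN] at hx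
    exact hx.2
  have haux : ∀ i j : Fin (N+1), i.1 < j.1 → Disjoint (P i) (P j) := by
    intro i j hij
    have hj0 : j.1 ≠ 0 := by omega
    have hjN : j.1 - 1 < N := by omega
    by_cases hi0 : i.1 = 0
    · rw [Set.disjoint_left]
      intro x hxi hxj
      have hx0 : x ∈ t 0 := chain 0 (j.1 - 1) (Nat.zero_le _) hjN (hPsub j hj0 hxj)
      simp only [hP, hi0] at hxi
      norm_num at hxi
      exact hxi hx0
    · have hiN : i.1 ≠ N := by omega
      rw [Set.disjoint_left]
      intro x hxi hxj
      have hxti : x ∈ t i.1 := chain i.1 (j.1 - 1) (by omega) hjN (hPsub j hj0 hxj)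
      exact hPnotin i hi0 hiN x hxi hxti
  have hPdisj : Pairwise fun i j => Disjoint (P i) (P j) := by
    intro i j hij
    rcases lt_or_gt_of_ne (fun h => hij (Fin.ext h)) with h | h
    · exact haux i j h
    · exact (haux j i h).symm
  have hPcover : (⋃ i, P i) = univ := by
    apply Set.eq_univ_of_forall
    intro x
    by_cases hx0 : x ∈ t 0
    · by_cases hxtop : x ∈ t (N-1)
      · refine Set.mem_iUnion.2 ⟨⟨N, by omega⟩, ?_⟩
        rw [hPval N (by omega), if_neg (by omega : ¬ N = 0), if_pos rfl]
        exact hxtop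
      · have hex : ∃ i, x ∉ t i := ⟨N-1, hxtop⟩
        set i0 := Nat.find hex with hi0def
        have hspec : x ∉ t i0 := Nat.find_spec hex
        have hle : i0 ≤ N - 1 := Nat.find_min' hex hxtop
        have hpos : i0 ≠ 0 := fun h => hspec (h ▸ hx0)
        have hprev : x ∈ t (i0 - 1) := by
          have := Nat.find_min hex (show i0 - 1 < i0 by omega)
          rwa [not_not] at this
        refine Set.mem_iUnion.2 ⟨⟨i0, by omega⟩, ?_⟩
        rw [hPval i0 (by omega), if_neg (by omega : ¬ i0 = 0), if_neg (by omega : ¬ i0 = N)]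
        exact ⟨hprev, hspec⟩
    · refine Set.mem_iUnion.2 ⟨⟨0, by omega⟩, ?_⟩
      rw [hPval 0 (by omega), if_pos rfl]
      exact hx0
  refine ⟨fun x => ∑ i, (P i).indicator (fun _ => c i) x,
    ⟨N+1, c, P, hPmem, hPdisj, hPcover, fun x => rfl⟩, ?_⟩
  intro x hx
  simp only [Set.mem_union, not_or, Set.mem_compl_iff, not_not] at hx
  obtain ⟨hxtop, hx0⟩ := hx
  have hex : ∃ i, x ∉ t i := ⟨N-1, hxtop⟩
  set i0 := Nat.find hex with hi0def
  have hspec : x ∉ t i0 := Nat.find_spec hex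
  have hle : i0 ≤ N - 1 := Nat.find_min' hex hxtop
  have hpos : i0 ≠ 0 := fun h => hspec (h ▸ hx0)
  have hprev : x ∈ t (i0 - 1) := by
    have := Nat.find_min hex (show i0 - 1 < i0 by omega)
    rwa [not_not] at this
  have hxP : x ∈ P ⟨i0, by omega⟩ := by
    rw [hPval i0 (by omega), if_neg (by omega : ¬ i0 = 0), if_neg (by omega : ¬ i0 = N)]
    exact ⟨hprev, hspec⟩
  have hsx : (fun x => ∑ i, (P i).indicator (fun _ => c i) x) x = c ⟨i0, by omega⟩ :=
    partition_sum_eq hPdisj hxP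
  rw [hsx]
  have hcval : c ⟨i0, by omega⟩ = v (i0 - 1) := by
    rw [hcval2 i0 (by omega), if_neg (by omega : ¬ i0 = 0)]
  rw [hcval]
  have hsucc : i0 - 1 + 1 = i0 := by omega
  have hb := gridFun_bound G (m := m) (i := i0 - 1) (x := x)
    (by omega : i0 - 1 + 1 < N) (hprev) (by rw [hsucc]; exact hspec)
  rw [hsucc] at hb
  have hgap := G.gap m (i0 - 1) (by omega : i0 - 1 + 1 < G.L m)
  rw [hsucc] at hgap
  rw [abs_le]
  constructor
  · have h1 : (0:ℝ) ≤ 2/((m:ℝ)+1) := by positivity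
    have h2 := hb.1
    simp only [hv]
    linarith
  · have h2 := hb.2
    simp only [hv]
    linarith

theorem grid_approx_simple (hμ : IsCharge 𝒜 μ) (hpj : pjField 𝒜 μ = 𝒜) (h𝒜' : IsSetField 𝒜')
    (hsub : 𝒜' ⊆ 𝒜) (h𝒞f : IsSetField 𝒞) (h𝒞A : 𝒞 ⊆ 𝒜)
    (G : GoodGrid 𝒜 (pjField 𝒜' μ) 𝒞 μ f) :
    ∀ δ > (0:ℝ), ∃ g, IsSimpleFn 𝒜' g ∧
      outerCharge 𝒜' μ {x | δ < |gridFun G x - g x|} < δ := by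
  intro δ hδ
  obtain ⟨m, hm⟩ := exists_two_div_lt (show (0:ℝ) < δ/2 by linarith)
  obtain ⟨s, hs, hclose⟩ := grid_partition hμ hpj h𝒜' hsub G m
  obtain ⟨g, D, hg, hD, hμD, hgD⟩ := simple_pj_modify hμ h𝒜' hsub hs
    (show (0:ℝ) < δ/4 by linarith)
  refine ⟨g, hg, ?_⟩
  set E := G.T' (G.k m (G.L m - 1)) ∪ (G.T' (G.k m 0))ᶜ with hE
  have hsubset : {x | δ < |gridFun G x - g x|} ⊆ E ∪ D := by
    intro x hx
    simp only [Set.mem_setOf_eq] at hx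
    by_cases hxD : x ∈ D
    · exact Or.inr hxD
    · left
      by_contra hxE
      have h1 := hclose x hxE
      rw [hgD x hxD] at hx
      linarith
  have hEmem : E ∈ pjField 𝒜' μ := by
    have hFf : IsSetField (pjField 𝒜' μ) := pjField_isSetField hμ hsub h𝒜'
    exact hFf.union_mem _ (G.T'mem _) _ (hFf.compl_mem _ (G.T'mem _))
  calc outerCharge 𝒜' μ {x | δ < |gridFun G x - g x|}
      ≤ outerCharge 𝒜' μ (E ∪ D) := oc_mono hμ hsub h𝒜' hsubset
    _ ≤ outerCharge 𝒜' μ E + outerCharge 𝒜' μ D := oc_subadd hμ hsub h𝒜' _ _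
    _ ≤ outerCharge 𝒜' μ E + μ D := by
        have := oc_le_of_cover hμ hsub hD (Subset.rfl : D ⊆ D)
        linarith
    _ < δ/2 + δ/4 := by
        have := grid_exc_bound hμ hpj h𝒜' hsub h𝒞f h𝒞A G m
        have h2 : outerCharge 𝒜' μ E < δ/2 := lt_trans this hm
        linarith
    _ < δ := by linarith

theorem grid_smooth (hμ : IsCharge 𝒜 μ) (hpj : pjField 𝒜 μ = 𝒜) (h𝒜' : IsSetField 𝒜')
    (hsub : 𝒜' ⊆ 𝒜) (h𝒞f : IsSetField 𝒞) (h𝒞A : 𝒞 ⊆ 𝒜)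
    (G : GoodGrid 𝒜 (pjField 𝒜' μ) 𝒞 μ f) :
    ∀ δ > (0:ℝ), ∃ K > (0:ℝ), outerCharge 𝒜' μ {x | K < |gridFun G x|} < δ := by
  intro δ hδ
  obtain ⟨m, hm⟩ := exists_two_div_lt hδ
  set vtop := G.q (G.k m (G.L m - 1)) with hvtop
  set vbot := G.q (G.k m 0) with hvbot
  set K := 1 + max (max vtop 0) (max (-vbot) 0) with hK
  have hKpos : 0 < K := by
    have h1 : (0:ℝ) ≤ max (max vtop 0) (max (-vbot) 0) :=
      le_trans (le_max_right _ _) (le_max_left _ _)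
    linarith
  refine ⟨K, hKpos, ?_⟩
  set E := G.T' (G.k m (G.L m - 1)) ∪ (G.T' (G.k m 0))ᶜ with hE
  have hsubset : {x | K < |gridFun G x|} ⊆ E := by
    intro x hx
    simp only [Set.mem_setOf_eq] at hx
    rcases lt_abs.1 hx with h | h
    · left
      by_contra hc
      have := gridFun_le_top G (m := m) hc
      have h2 : max vtop 0 ≤ max (max vtop 0) (max (-vbot) 0) := le_max_left _ _
      rw [← hvtop] at this
      linarith
    · right
      simp only [Set.mem_compl_iff]
      intro hc
      have := gridFun_ge_bot G (m := m) hc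
      rw [← hvbot] at this
      have h2 : -vbot ≤ max (max vtop 0) (max (-vbot) 0) :=
        le_trans (le_max_left _ _) (le_max_right _ _)
      have h3 : (0:ℝ) ≤ max (max vtop 0) (max (-vbot) 0) :=
        le_trans (le_max_right _ _) (le_max_right _ _)
      have h4 : min vbot 0 ≤ gridFun G x := this
      rcases le_total vbot 0 with h5 | h5
      · rw [min_eq_left h5] at h4
        linarith
      · rw [min_eq_right h5] at h4
        linarith
  calc outerCharge 𝒜' μ {x | K < |gridFun G x|}
      ≤ outerCharge 𝒜' μ E := oc_mono hμ hsub h𝒜' hsubset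
    _ < 2/((m:ℝ)+1) := grid_exc_bound hμ hpj h𝒜' hsub h𝒞f h𝒞A G m
    _ < δ := hm

end Aux10
section Aux11

open Filter Set Topology

variable {X : Type*} {𝒜 𝒜' 𝒞 : Set (Set X)} {μ : Set X → ℝ} {f : X → ℝ}

theorem one_div_succ_lt {a : ℝ} (ha : 0 < a) : ∀ᶠ n : ℕ in atTop, 1/((n:ℝ)+1) < a :=
  tendsto_one_div_add_atTop_nhds_zero_nat.eventually_lt_const ha

theorem grid_eqae (hμ : IsCharge 𝒜 μ) (hpj : pjField 𝒜 μ = 𝒜)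
    (h𝒞f : IsSetField 𝒞) (h𝒞A : 𝒞 ⊆ 𝒜) (h𝒩𝒞 : nullSets 𝒜 μ ⊆ 𝒞)
    (G : GoodGrid 𝒜 (pjField 𝒜' μ) 𝒞 μ f) :
    EqAE 𝒞 μ f (gridFun G) := by
  classical
  intro ε hε
  refine le_antisymm ?_ (oc_nonneg hμ h𝒞A _)
  apply le_of_forall_pos_le_add
  intro ε' hε'
  obtain ⟨m, hm⟩ := exists_two_div_lt (show (0:ℝ) < min ε ε' from lt_min hε hε')
  have hN2 : 2 ≤ G.L m := G.Lge m
  obtain ⟨Dm, hDm, hDsub, hμDm⟩ := oc_exists_cover hμ h𝒞f (G.Ksm m)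
  set Δ : ℕ → Set X := fun i =>
    (G.T' (G.k m i) \ {x | G.q (G.k m i) < f x}) ∪
      ({x | G.q (G.k m i) < f x} \ G.T' (G.k m i)) with hΔ
  have hΔnull : ∀ i, Δ i ∈ nullSets 𝒜 μ := fun i => G.T'null (G.k m i)
  set Δset := ⋃ i ∈ Finset.range (G.L m), Δ i with hΔset
  have hsubset : {x | ε < |f x - gridFun G x|} ⊆ Dm ∪ Δset := by
    intro x hx
    simp only [Set.mem_setOf_eq] at hx
    by_cases hxD : x ∈ Dm
    · exact Or.inl hxD
    by_cases hxΔ : x ∈ Δset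
    · exact Or.inr hxΔ
    exfalso
    have hKx : |f x| ≤ G.Kb m := by
      by_contra hc
      push_neg at hc
      exact hxD (hDsub hc)
    have hiff : ∀ i, i < G.L m → (x ∈ G.T' (G.k m i) ↔ G.q (G.k m i) < f x) := by
      intro i hi
      constructor
      · intro hxt
        by_contra hc
        exact hxΔ (Set.mem_biUnion (Finset.mem_range.2 hi) (Or.inl ⟨hxt, hc⟩))
      · intro hvf
        by_contra hc
        exact hxΔ (Set.mem_biUnion (Finset.mem_range.2 hi) (Or.inr ⟨hvf, hc⟩))
    have hflo : G.q (G.k m 0) < f x := by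
      have h1 := G.lo m
      have h2 := neg_le_abs (f x)
      linarith
    have hx0 : x ∈ G.T' (G.k m 0) := (hiff 0 (by omega)).2 hflo
    have hxtop : x ∉ G.T' (G.k m (G.L m - 1)) := by
      intro hc
      have h1 := (hiff (G.L m - 1) (by omega)).1 hc
      have h2 := G.hi m
      have h3 := le_abs_self (f x)
      linarith
    have hex : ∃ i, x ∉ G.T' (G.k m i) := ⟨G.L m - 1, hxtop⟩
    have hspec : x ∉ G.T' (G.k m (Nat.find hex)) := Nat.find_spec hex
    have hle : Nat.find hex ≤ G.L m - 1 := Nat.find_min' hex hxtop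
    have hpos : Nat.find hex ≠ 0 := fun h => hspec (h ▸ hx0)
    set i0 := Nat.find hex with hi0
    have hprev : x ∈ G.T' (G.k m (i0 - 1)) := by
      have := Nat.find_min hex (show i0 - 1 < i0 by omega)
      rwa [not_not] at this
    have hfprev : G.q (G.k m (i0 - 1)) < f x := (hiff (i0-1) (by omega)).1 hprev
    have hfcur : f x ≤ G.q (G.k m i0) := by
      by_contra hc
      push_neg at hc
      exact hspec ((hiff i0 (by omega)).2 hc)
    have hsucc : i0 - 1 + 1 = i0 := by omega
    have hb := gridFun_bound G (m := m) (i := i0 - 1) (x := x)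
      (by omega : i0 - 1 + 1 < G.L m) hprev (by rw [hsucc]; exact hspec)
    rw [hsucc] at hb
    have hgap := G.gap m (i0 - 1) (by omega : i0 - 1 + 1 < G.L m)
    rw [hsucc] at hgap
    have hεlt : 2/((m:ℝ)+1) < ε := lt_of_lt_of_le hm (min_le_left _ _)
    have h1 := hb.1
    have h2 := hb.2
    have habs : |f x - gridFun G x| ≤ 2/((m:ℝ)+1) := by
      rw [abs_le]
      constructor
      · linarith
      · linarith
    linarith
  have hΔoc : outerCharge 𝒞 μ Δset = 0 := by
    apply oc_null_biUnion hμ h𝒞A h𝒞f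
    intro i _
    refine le_antisymm ?_ (oc_nonneg hμ h𝒞A _)
    have h1 : Δ i ∈ 𝒞 := h𝒩𝒞 (hΔnull i)
    have h2 := oc_le_of_cover hμ h𝒞A h1 (Subset.rfl : Δ i ⊆ Δ i)
    rw [mu_null hμ hpj (hΔnull i)] at h2
    exact h2
  have hcalc : outerCharge 𝒞 μ {x | ε < |f x - gridFun G x|} ≤ μ Dm := by
    calc outerCharge 𝒞 μ {x | ε < |f x - gridFun G x|}
        ≤ outerCharge 𝒞 μ (Dm ∪ Δset) := oc_mono hμ h𝒞A h𝒞f hsubset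
      _ ≤ outerCharge 𝒞 μ Dm + outerCharge 𝒞 μ Δset := oc_subadd hμ h𝒞A h𝒞f _ _
      _ ≤ μ Dm := by
          rw [hΔoc]
          have := oc_le_of_cover hμ h𝒞A hDm (Subset.rfl : Dm ⊆ Dm)
          linarith
  have h1m : 2/((m:ℝ)+1) = 1/((m:ℝ)+1) + 1/((m:ℝ)+1) := by ring
  have hpos1 : (0:ℝ) < 1/((m:ℝ)+1) := by positivity
  have hεlt' : 2/((m:ℝ)+1) < ε' := lt_of_lt_of_le hm (min_le_right _ _)
  linarith

theorem grid_memL0 (hμ : IsCharge 𝒜 μ) (hpj : pjField 𝒜 μ = 𝒜) (h𝒜' : IsSetField 𝒜')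
    (hsub : 𝒜' ⊆ 𝒜) (h𝒞f : IsSetField 𝒞) (h𝒞A : 𝒞 ⊆ 𝒜)
    (G : GoodGrid 𝒜 (pjField 𝒜' μ) 𝒞 μ f) :
    ∃ g : ℕ → X → ℝ, (∀ n, IsSimpleFn 𝒜' (g n)) ∧ HazyConv 𝒜' μ g (gridFun G) ∧
      (∀ n : ℕ, outerCharge 𝒜' μ {x | 1/((n:ℝ)+1) < |gridFun G x - g n x|} < 1/((n:ℝ)+1)) := by
  have happ := grid_approx_simple hμ hpj h𝒜' hsub h𝒞f h𝒞A G
  have hch : ∀ n : ℕ, ∃ g, IsSimpleFn 𝒜' g ∧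
      outerCharge 𝒜' μ {x | 1/((n:ℝ)+1) < |gridFun G x - g x|} < 1/((n:ℝ)+1) := by
    intro n
    exact happ (1/((n:ℝ)+1)) (by positivity)
  choose g hgsimple hgoc using hch
  refine ⟨g, hgsimple, ?_, hgoc⟩
  intro ε hε
  apply tendsto_zero_of_forall_lt (fun n => oc_nonneg hμ hsub _)
  intro β hβ
  filter_upwards [one_div_succ_lt hε, one_div_succ_lt hβ] with n h1 h2
  have hsubn : {x | ε < |g n x - gridFun G x|} ⊆
      {x | 1/((n:ℝ)+1) < |gridFun G x - g n x|} := by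
    intro x hx
    simp only [Set.mem_setOf_eq] at hx ⊢
    rw [abs_sub_comm]
    linarith
  calc outerCharge 𝒜' μ {x | ε < |g n x - gridFun G x|}
      ≤ outerCharge 𝒜' μ {x | 1/((n:ℝ)+1) < |gridFun G x - g n x|} :=
        oc_mono hμ hsub h𝒜' hsubn
    _ < 1/((n:ℝ)+1) := hgoc n
    _ < β := h2

end Aux11
section Aux12

open Filter Set Topology

variable {X : Type*} {𝒜 𝒜' 𝒞 : Set (Set X)} {μ : Set X → ℝ} {f : X → ℝ}

theorem grid_rpow_approx (hμ : IsCharge 𝒜 μ) (hpj : pjField 𝒜 μ = 𝒜) (h𝒜' : IsSetField 𝒜')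
    (hsub : 𝒜' ⊆ 𝒜) (h𝒞f : IsSetField 𝒞) (h𝒞A : 𝒞 ⊆ 𝒜)
    (G : GoodGrid 𝒜 (pjField 𝒜' μ) 𝒞 μ f) {p : ℝ} (hp : 0 ≤ p) :
    ∀ δ > (0:ℝ), ∃ t, IsSimpleFn 𝒜' t ∧
      outerCharge 𝒜' μ {x | δ < |t x - |gridFun G x| ^ p|} < δ := by
  intro δ hδ
  obtain ⟨K, hK, hKoc⟩ := grid_smooth hμ hpj h𝒜' hsub h𝒞f h𝒞A G (δ/2) (by linarith)
  obtain ⟨η, hη, hηspec⟩ := rpow_abs_uniform p (K+1) δ (by linarith) hδ hp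
  set δ' := min η (min 1 (δ/4)) with hδ'
  have hδ'pos : 0 < δ' := by
    apply lt_min hη
    apply lt_min one_pos
    linarith
  obtain ⟨g, hg, hgoc⟩ := grid_approx_simple hμ hpj h𝒜' hsub h𝒞f h𝒞A G δ' hδ'pos
  refine ⟨fun x => |g x| ^ p, simple_map hg (fun a => |a| ^ p), ?_⟩
  have hsubset : {x | δ < abs (|g x| ^ p - |gridFun G x| ^ p)} ⊆
      {x | δ' < |gridFun G x - g x|} ∪ {x | K < |gridFun G x|} := by
    intro x hx
    simp only [Set.mem_setOf_eq] at hx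
    by_contra hc
    simp only [Set.mem_union, Set.mem_setOf_eq, not_or, not_lt] at hc
    obtain ⟨h1, h2⟩ := hc
    have hgb : |g x| ≤ K + 1 := by
      have := abs_sub_abs_le_abs_sub (g x) (gridFun G x)
      have h3 : |g x - gridFun G x| = |gridFun G x - g x| := abs_sub_comm _ _
      have h4 : δ' ≤ 1 := le_trans (min_le_right _ _) (min_le_left _ _)
      linarith
    have hhb : |gridFun G x| ≤ K + 1 := by linarith
    have hd : |g x - gridFun G x| ≤ η := by
      rw [abs_sub_comm]
      exact le_trans h1 (min_le_left _ _)
    have := hηspec (g x) (gridFun G x) hgb hhb hd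
    linarith
  calc outerCharge 𝒜' μ {x | δ < abs (|g x| ^ p - |gridFun G x| ^ p)}
      ≤ outerCharge 𝒜' μ ({x | δ' < |gridFun G x - g x|} ∪ {x | K < |gridFun G x|}) :=
        oc_mono hμ hsub h𝒜' hsubset
    _ ≤ outerCharge 𝒜' μ {x | δ' < |gridFun G x - g x|} +
        outerCharge 𝒜' μ {x | K < |gridFun G x|} := oc_subadd hμ hsub h𝒜' _ _
    _ < δ' + δ/2 := by linarith
    _ ≤ δ/4 + δ/2 := by
        have : δ' ≤ δ/4 := le_trans (min_le_right _ _) (min_le_right _ _)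
        linarith
    _ < δ := by linarith

theorem grid_memLp (hμ : IsCharge 𝒜 μ) (hpj : pjField 𝒜 μ = 𝒜) (h𝒜' : IsSetField 𝒜')
    (hsub : 𝒜' ⊆ 𝒜) (h𝒞f : IsSetField 𝒞) (h𝒞A : 𝒞 ⊆ 𝒜) (h𝒩𝒞 : nullSets 𝒜 μ ⊆ 𝒞)
    (happrox : ∀ A ∈ 𝒞, ∃ T ∈ 𝒜', outerCharge 𝒜 μ ((A \ T) ∪ (T \ A)) = 0)
    (G : GoodGrid 𝒜 (pjField 𝒜' μ) 𝒞 μ f) {p : ℝ} (hp : 1 ≤ p)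
    (hfL0 : MemL0 𝒞 μ f) (hfL1 : MemL1 𝒞 μ (fun x => |f x| ^ p)) :
    MemL1 𝒜' μ (fun x => |gridFun G x| ^ p) := by
  classical
  have hp0 : 0 ≤ p := by linarith
  obtain ⟨u, husimple, huconv, hucauchy⟩ := hfL1
  -- modify u on null sets to be 𝒜'-simple
  have hmod : ∀ k : ℕ, ∃ g N, IsSimpleFn 𝒜' g ∧ outerCharge 𝒜 μ N = 0 ∧
      ∀ x, x ∉ N → g x = u k x :=
    fun k => simple_null_modify hμ h𝒜' happrox (husimple k)
  choose ut Nt hutsimple hNtnull hut using hmod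
  have heq := grid_eqae hμ hpj h𝒞f h𝒞A h𝒩𝒞 G
  refine ⟨ut, hutsimple, ?_, ?_⟩
  · -- hazy convergence of ut to |h|^p w.r.t. 𝒜'
    intro ε hε
    apply tendsto_zero_of_forall_lt (fun n => oc_nonneg hμ hsub _)
    intro β hβ
    -- smoothness of f
    obtain ⟨K1, hK1, hK1oc⟩ := memL0_smooth hμ h𝒞f h𝒞A hfL0 (β/8) (by linarith)
    obtain ⟨η, hη, hηspec⟩ := rpow_abs_uniform p (K1+1) (ε/8) (by linarith) (by linarith) hp0
    -- |f|^p close to |h|^p except small set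
    have hffh : outerCharge 𝒜 μ {x | ε/8 < abs (|f x| ^ p - |gridFun G x| ^ p)} ≤ β/8 := by
      have hsubset : {x | ε/8 < abs (|f x| ^ p - |gridFun G x| ^ p)} ⊆
          {x | min η 1 < |f x - gridFun G x|} ∪ {x | K1 < |f x|} := by
        intro x hx
        simp only [Set.mem_setOf_eq] at hx
        by_contra hc
        simp only [Set.mem_union, Set.mem_setOf_eq, not_or, not_lt] at hc
        obtain ⟨h1, h2⟩ := hc
        have hfb : |f x| ≤ K1 + 1 := by linarith
        have hhb : |gridFun G x| ≤ K1 + 1 := by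
          have := abs_sub_abs_le_abs_sub (gridFun G x) (f x)
          have h3 : |gridFun G x - f x| = |f x - gridFun G x| := abs_sub_comm _ _
          have h4 : min η 1 ≤ 1 := min_le_right _ _
          linarith
        have hd : |f x - gridFun G x| ≤ η := le_trans h1 (min_le_left _ _)
        have := hηspec (f x) (gridFun G x) hfb hhb hd
        linarith
      have h1 : outerCharge 𝒜 μ {x | min η 1 < |f x - gridFun G x|} = 0 := by
        refine le_antisymm ?_ (oc_nonneg hμ Subset.rfl _)
        have h2 := heq (min η 1) (lt_min hη one_pos)
        have h3 := oc_anti_field hμ Subset.rfl h𝒞A h𝒞f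
          {x | min η 1 < |f x - gridFun G x|}
        rw [h2] at h3
        exact h3
      calc outerCharge 𝒜 μ {x | ε/8 < abs (|f x| ^ p - |gridFun G x| ^ p)}
          ≤ outerCharge 𝒜 μ ({x | min η 1 < |f x - gridFun G x|} ∪ {x | K1 < |f x|}) :=
            oc_mono hμ Subset.rfl hμ.isSetField hsubset
        _ ≤ outerCharge 𝒜 μ {x | min η 1 < |f x - gridFun G x|} +
            outerCharge 𝒜 μ {x | K1 < |f x|} := oc_subadd hμ Subset.rfl hμ.isSetField _ _
        _ ≤ β/8 := by
            rw [h1]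
            have h4 := oc_anti_field hμ Subset.rfl h𝒞A h𝒞f {x | K1 < |f x|}
            linarith
    -- approximation of |h|^p by an 𝒜'-simple function
    obtain ⟨t, htsimple, htoc⟩ := grid_rpow_approx hμ hpj h𝒜' hsub h𝒞f h𝒞A G hp0
      (min (ε/4) (β/4)) (by positivity)
    filter_upwards [(huconv (ε/8) (by linarith)).eventually_lt_const
      (show (0:ℝ) < β/4 by linarith)] with k hk
    -- the middle simple set
    have hMsimple : IsSimpleFn 𝒜' (fun x => |ut k x - t x|) :=
      simple_comb h𝒜' (fun a b => |a - b|) (hutsimple k) htsimple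
    set M := {x | ε/2 < |ut k x - t x|} with hM
    have hMmem : M ∈ 𝒜' := simple_superlevel h𝒜' hMsimple (ε/2)
    have hMoc : outerCharge 𝒜' μ M = outerCharge 𝒜 μ M := by
      rw [oc_eq_self hμ hsub h𝒜' hMmem, oc_eq_self hμ Subset.rfl hμ.isSetField (hsub hMmem)]
    -- bound oc_𝒜 M
    have hMsub : M ⊆ {x | ε/4 < |ut k x - |gridFun G x| ^ p|} ∪
        {x | ε/4 < |t x - |gridFun G x| ^ p|} := by
      intro x hx
      simp only [hM, Set.mem_setOf_eq] at hx
      simp only [Set.mem_union, Set.mem_setOf_eq]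
      by_contra hc
      simp only [not_or, not_lt] at hc
      have := abs_sub (ut k x - |gridFun G x| ^ p) (t x - |gridFun G x| ^ p)
      have h3 : |ut k x - t x| ≤ |ut k x - |gridFun G x| ^ p| + |t x - |gridFun G x| ^ p| := by
        have h4 : ut k x - t x = (ut k x - |gridFun G x| ^ p) - (t x - |gridFun G x| ^ p) := by
          ring
        rw [h4]
        exact abs_sub _ _
      linarith [hc.1, hc.2]
    have hfirst : outerCharge 𝒜 μ {x | ε/4 < |ut k x - |gridFun G x| ^ p|} ≤
        β/4 + β/8 := by
      have hsubset2 : {x | ε/4 < |ut k x - |gridFun G x| ^ p|} ⊆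
          ({x | ε/8 < |u k x - |f x| ^ p|} ∪ Nt k) ∪
            {x | ε/8 < abs (|f x| ^ p - |gridFun G x| ^ p)} := by
        intro x hx
        simp only [Set.mem_setOf_eq] at hx
        by_contra hc
        simp only [Set.mem_union, Set.mem_setOf_eq, not_or, not_lt] at hc
        obtain ⟨⟨h1, h2⟩, h3⟩ := hc
        have h4 : ut k x = u k x := hut k x h2
        have h5 : |ut k x - |gridFun G x| ^ p| ≤
            |u k x - |f x| ^ p| + abs (|f x| ^ p - |gridFun G x| ^ p) := by
          rw [h4]
          have : u k x - |gridFun G x| ^ p =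
              (u k x - |f x| ^ p) + (|f x| ^ p - |gridFun G x| ^ p) := by ring
          rw [this]
          exact abs_add_le _ _
        linarith
      calc outerCharge 𝒜 μ {x | ε/4 < |ut k x - |gridFun G x| ^ p|}
          ≤ outerCharge 𝒜 μ (({x | ε/8 < |u k x - |f x| ^ p|} ∪ Nt k) ∪
              {x | ε/8 < abs (|f x| ^ p - |gridFun G x| ^ p)}) :=
            oc_mono hμ Subset.rfl hμ.isSetField hsubset2
        _ ≤ (outerCharge 𝒜 μ {x | ε/8 < |u k x - |f x| ^ p|} + outerCharge 𝒜 μ (Nt k)) +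
            outerCharge 𝒜 μ {x | ε/8 < abs (|f x| ^ p - |gridFun G x| ^ p)} := by
            have ha := oc_subadd hμ Subset.rfl hμ.isSetField
              ({x | ε/8 < |u k x - |f x| ^ p|} ∪ Nt k)
              {x | ε/8 < abs (|f x| ^ p - |gridFun G x| ^ p)}
            have hb := oc_subadd hμ Subset.rfl hμ.isSetField
              {x | ε/8 < |u k x - |f x| ^ p|} (Nt k)
            linarith
        _ ≤ β/4 + β/8 := by
            rw [hNtnull k]
            have h6 := oc_anti_field hμ Subset.rfl h𝒞A h𝒞f {x | ε/8 < |u k x - |f x| ^ p|}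
            linarith
    have hsecond : outerCharge 𝒜 μ {x | ε/4 < |t x - |gridFun G x| ^ p|} ≤ β/4 := by
      have hss : {x | ε/4 < |t x - |gridFun G x| ^ p|} ⊆
          {x | min (ε/4) (β/4) < |t x - |gridFun G x| ^ p|} := by
        intro x hx
        simp only [Set.mem_setOf_eq] at hx ⊢
        exact lt_of_le_of_lt (min_le_left _ _) hx
      calc outerCharge 𝒜 μ {x | ε/4 < |t x - |gridFun G x| ^ p|}
          ≤ outerCharge 𝒜 μ {x | min (ε/4) (β/4) < |t x - |gridFun G x| ^ p|} :=
            oc_mono hμ Subset.rfl hμ.isSetField hss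
        _ ≤ outerCharge 𝒜' μ {x | min (ε/4) (β/4) < |t x - |gridFun G x| ^ p|} :=
            oc_anti_field hμ Subset.rfl hsub h𝒜' _
        _ ≤ β/4 := le_of_lt (lt_of_lt_of_le htoc (min_le_right _ _))
    -- final assembly
    have hfinal : {x | ε < |ut k x - |gridFun G x| ^ p|} ⊆
        M ∪ {x | ε/2 < |t x - |gridFun G x| ^ p|} := by
      intro x hx
      simp only [Set.mem_setOf_eq] at hx
      simp only [hM, Set.mem_union, Set.mem_setOf_eq]
      by_contra hc
      simp only [not_or, not_lt] at hc
      have h4 : ut k x - |gridFun G x| ^ p = (ut k x - t x) + (t x - |gridFun G x| ^ p) := by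
        ring
      have h5 : |ut k x - |gridFun G x| ^ p| ≤ |ut k x - t x| + |t x - |gridFun G x| ^ p| := by
        rw [h4]; exact abs_add_le _ _
      linarith [hc.1, hc.2]
    have hlast : outerCharge 𝒜' μ {x | ε/2 < |t x - |gridFun G x| ^ p|} ≤ β/4 := by
      have hss : {x | ε/2 < |t x - |gridFun G x| ^ p|} ⊆
          {x | min (ε/4) (β/4) < |t x - |gridFun G x| ^ p|} := by
        intro x hx
        simp only [Set.mem_setOf_eq] at hx ⊢
        have : min (ε/4) (β/4) ≤ ε/4 := min_le_left _ _
        linarith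
      calc outerCharge 𝒜' μ {x | ε/2 < |t x - |gridFun G x| ^ p|}
          ≤ outerCharge 𝒜' μ {x | min (ε/4) (β/4) < |t x - |gridFun G x| ^ p|} :=
            oc_mono hμ hsub h𝒜' hss
        _ ≤ β/4 := le_of_lt (lt_of_lt_of_le htoc (min_le_right _ _))
    calc outerCharge 𝒜' μ {x | ε < |ut k x - |gridFun G x| ^ p|}
        ≤ outerCharge 𝒜' μ (M ∪ {x | ε/2 < |t x - |gridFun G x| ^ p|}) :=
          oc_mono hμ hsub h𝒜' hfinal
      _ ≤ outerCharge 𝒜' μ M + outerCharge 𝒜' μ {x | ε/2 < |t x - |gridFun G x| ^ p|} :=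
          oc_subadd hμ hsub h𝒜' _ _
      _ ≤ (β/4 + β/8 + β/4) + β/4 := by
          have h7 : outerCharge 𝒜 μ M ≤ (β/4 + β/8) + β/4 := by
            calc outerCharge 𝒜 μ M
                ≤ outerCharge 𝒜 μ ({x | ε/4 < |ut k x - |gridFun G x| ^ p|} ∪
                    {x | ε/4 < |t x - |gridFun G x| ^ p|}) :=
                  oc_mono hμ Subset.rfl hμ.isSetField hMsub
              _ ≤ outerCharge 𝒜 μ {x | ε/4 < |ut k x - |gridFun G x| ^ p|} +
                  outerCharge 𝒜 μ {x | ε/4 < |t x - |gridFun G x| ^ p|} :=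
                  oc_subadd hμ Subset.rfl hμ.isSetField _ _
              _ ≤ (β/4 + β/8) + β/4 := by linarith
          rw [hMoc]
          linarith
      _ < β := by linarith
  · -- Cauchy integrals transfer
    have hinteq : (fun mn : ℕ × ℕ => sIntegral μ (fun x => |ut mn.1 x - ut mn.2 x|)) =
        (fun mn : ℕ × ℕ => sIntegral μ (fun x => |u mn.1 x - u mn.2 x|)) := by
      funext mn
      apply sIntegral_congr_null hμ
      · exact simple_comb hμ.isSetField (fun a b => |a - b|)
          (simple_mono hsub (hutsimple mn.1)) (simple_mono hsub (hutsimple mn.2))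
      · exact simple_comb hμ.isSetField (fun a b => |a - b|)
          (simple_mono h𝒞A (husimple mn.1)) (simple_mono h𝒞A (husimple mn.2))
      · exact oc_null_union hμ Subset.rfl hμ.isSetField (hNtnull mn.1) (hNtnull mn.2)
      · intro x hx
        simp only [Set.mem_union] at hx
        push_neg at hx
        rw [hut mn.1 x hx.1, hut mn.2 x hx.2]
    rw [hinteq]
    exact hucauchy

end Aux12

/-- Let `(X,𝒜,μ)` be Peano-Jordan complete with null sets `𝒩`, and
`𝒜′` a sub-field with `\overline{α(𝒜′ ∪ 𝒩)} = α(\overline{𝒜′} ∪ 𝒩)`. Then every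
`f ∈ L₀(X, α(𝒜′ ∪ 𝒩), μ)` equals a.e. (w.r.t. `α(𝒜′ ∪ 𝒩)`) some
`h ∈ L₀(X, 𝒜′, μ)`; moreover if `f ∈ L_p(X, α(𝒜′ ∪ 𝒩), μ)` for `p ∈ [1,∞)` then
`h ∈ L_p(X, 𝒜′, μ)`. -/
theorem null_modification_fn {X : Type*} (𝒜 𝒜' : Set (Set X)) (μ : Set X → ℝ)
    (hμ : IsCharge 𝒜 μ) (hpj : pjField 𝒜 μ = 𝒜)
    (h𝒜' : IsSetField 𝒜') (hsub : 𝒜' ⊆ 𝒜)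
    (hcond : pjField (genSetField (𝒜' ∪ nullSets 𝒜 μ)) μ =
      genSetField (pjField 𝒜' μ ∪ nullSets 𝒜 μ)) :
    ∀ f : X → ℝ, MemL0 (genSetField (𝒜' ∪ nullSets 𝒜 μ)) μ f →
      ∃ h : X → ℝ, MemL0 𝒜' μ h ∧
        EqAE (genSetField (𝒜' ∪ nullSets 𝒜 μ)) μ f h ∧
        ∀ p : ℝ, 1 ≤ p →
          MemLpC (genSetField (𝒜' ∪ nullSets 𝒜 μ)) μ p f → MemLpC 𝒜' μ p h := by
  intro f hf
  have h𝒞f : IsSetField (genSetField (𝒜' ∪ nullSets 𝒜 μ)) := genSetField_isSetField _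
  have h𝒞A : genSetField (𝒜' ∪ nullSets 𝒜 μ) ⊆ 𝒜 := C_subset_A hμ hpj hsub
  have h𝒩𝒞 : nullSets 𝒜 μ ⊆ genSetField (𝒜' ∪ nullSets 𝒜 μ) :=
    fun A hA => subset_genSetField _ (Or.inr hA)
  obtain ⟨G⟩ := goodGrid_exists hμ hpj h𝒜' hsub hcond hf
  have happrox : ∀ A ∈ genSetField (𝒜' ∪ nullSets 𝒜 μ), ∃ T ∈ 𝒜',
      outerCharge 𝒜 μ ((A \ T) ∪ (T \ A)) = 0 :=
    fun A hA => genSetField_null_approx hμ h𝒜' hA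
  obtain ⟨g, hgs, hgc, -⟩ := grid_memL0 hμ hpj h𝒜' hsub h𝒞f h𝒞A G
  refine ⟨gridFun G, ⟨g, hgs, hgc⟩, grid_eqae hμ hpj h𝒞f h𝒞A h𝒩𝒞 G, ?_⟩
  intro p hp hfLp
  exact ⟨⟨g, hgs, hgc⟩,
    grid_memLp hμ hpj h𝒜' hsub h𝒞f h𝒞A h𝒩𝒞 happrox G hp hfLp.1 hfLp.2⟩
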